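/- arXiv:2212.12194 — 6 statements merged into one kernel-verified Lean document; each statement's English description precedes it below -/
import Mathlib

section
/- Let n ≥ 1, let E ⊂ ℝⁿ be a convex body (compact, convex, with non-empty interior), let ξ ∈ S^{n−1} and α > 0. Then ∫_0^∞ t^{α−1}·vol_n(E ∩ (E + tξ)) dt = (1/(α(α+1))) ∫_{ξ^⊥} μ₁({t ∈ ℝ : y + tξ ∈ E})^{α+1} dy, where the outer integral on the right is over the hyperplane ξ^⊥ with respect to its (n−1)-dimensional Lebesgue measure and μ₁ denotes one-dimensional Lebesgue measure. -/
open MeasureTheory Metric Set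
open scoped ENNReal

noncomputable section Helpers

instance withLp2MeasurableSpace (E F : Type*) [MeasurableSpace E] [MeasurableSpace F]
    [TopologicalSpace E] [TopologicalSpace F] [BorelSpace E] [BorelSpace F]
    [SecondCountableTopology E] [SecondCountableTopology F] :
    MeasurableSpace (WithLp 2 (E × F)) := WithLp.measurableSpace 2 (E × F)

instance withLp2BorelSpace (E F : Type*) [MeasurableSpace E] [MeasurableSpace F]
    [TopologicalSpace E] [TopologicalSpace F] [BorelSpace E] [BorelSpace F]
    [SecondCountableTopology E] [SecondCountableTopology F] :
    BorelSpace (WithLp 2 (E × F)) := by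
  exact WithLp.borelSpace 2 E F

variable {E F : Type*}
  [NormedAddCommGroup E] [InnerProductSpace ℝ E] [FiniteDimensional ℝ E]
  [MeasurableSpace E] [BorelSpace E]
  [NormedAddCommGroup F] [InnerProductSpace ℝ F] [FiniteDimensional ℝ F]
  [MeasurableSpace F] [BorelSpace F]

theorem measurePreserving_withLpEquiv_symm :
    MeasurePreserving ((WithLp.equiv 2 (E × F)).symm)
      ((volume : Measure E).prod (volume : Measure F)) (volume : Measure (WithLp 2 (E × F))) := by
  have hmeas : Measurable ((WithLp.equiv 2 (E × F)).symm : E × F → WithLp 2 (E × F)) :=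
    WithLp.measurable_toLp 2 (E × F)
  refine ⟨hmeas, ?_⟩
  exact (WithLp.volume_preserving_toLp E F).map_eq


theorem inner_orthoComplement_zero (ξ : E) (y : ((ℝ ∙ ξ)ᗮ : Submodule ℝ E)) :
    inner (𝕜 := ℝ) (y : E) ξ = 0 := by
  have := (Submodule.mem_orthogonal (ℝ ∙ ξ) (y : E)).mp y.2 ξ
    (Submodule.mem_span_singleton_self ξ)
  rw [real_inner_comm]
  exact this

theorem measurePreserving_orthoProd (ξ : E) (hξ : ‖ξ‖ = 1) :
    MeasurePreserving (fun p : (((ℝ ∙ ξ)ᗮ : Submodule ℝ E) × ℝ) => (p.1 : E) + p.2 • ξ)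
      ((volume : Measure ((ℝ ∙ ξ)ᗮ : Submodule ℝ E)).prod (volume : Measure ℝ))
      (volume : Measure E) := by
  have hξ0 : ξ ≠ 0 := by
    intro h; rw [h, norm_zero] at hξ; norm_num at hξ
  have hcompl : IsCompl ((ℝ ∙ ξ)ᗮ) (ℝ ∙ ξ) :=
    (Submodule.isCompl_orthogonal_of_hasOrthogonalProjection (K := ℝ ∙ ξ)).symm
  let e₁ : ((((ℝ ∙ ξ)ᗮ : Submodule ℝ E)) × ℝ) ≃ₗ[ℝ] E :=
    ((LinearEquiv.refl ℝ (((ℝ ∙ ξ)ᗮ : Submodule ℝ E))).prodCongr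
      (LinearEquiv.toSpanNonzeroSingleton ℝ E ξ hξ0)).trans
      (Submodule.prodEquivOfIsCompl _ _ hcompl)
  have he₁ : ∀ p : (((ℝ ∙ ξ)ᗮ : Submodule ℝ E) × ℝ), e₁ p = (p.1 : E) + p.2 • ξ := by
    intro p
    simp [e₁, Submodule.coe_prodEquivOfIsCompl', LinearEquiv.toSpanNonzeroSingleton]
  let Φ : WithLp 2 ((((ℝ ∙ ξ)ᗮ : Submodule ℝ E)) × ℝ) ≃ₗᵢ[ℝ] E :=
    { (WithLp.linearEquiv 2 ℝ _).trans e₁ with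
      norm_map' := by
        intro x
        have h1 : ‖x‖ ^ 2 = ‖x.fst‖ ^ 2 + ‖x.snd‖ ^ 2 := WithLp.prod_norm_sq_eq_of_L2 x
        have h2 : ((WithLp.linearEquiv 2 ℝ _).trans e₁) x = (x.fst : E) + x.snd • ξ := he₁ _
        have hinner : inner (𝕜 := ℝ) (x.fst : E) (x.snd • ξ) = 0 := by
          rw [real_inner_smul_right, inner_orthoComplement_zero ξ x.fst, mul_zero]
        have h3 : ‖(x.fst : E) + x.snd • ξ‖ ^ 2 = ‖x.fst‖ ^ 2 + ‖x.snd‖ ^ 2 := by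
          rw [@norm_add_sq_real, hinner, norm_smul, hξ]
          simp [Real.norm_eq_abs]
        show ‖(WithLp.linearEquiv 2 ℝ _ ≪≫ₗ e₁) x‖ = ‖x‖
        rw [h2]
        nlinarith [norm_nonneg ((x.fst : E) + x.snd • ξ), norm_nonneg x, h1, h3] }
  have h2 : MeasurePreserving Φ volume volume := Φ.measurePreserving
  have h1 := measurePreserving_withLpEquiv_symm
    (E := (((ℝ ∙ ξ)ᗮ : Submodule ℝ E))) (F := ℝ)
  have h3 := h2.comp h1
  have hfun : (fun p : (((ℝ ∙ ξ)ᗮ : Submodule ℝ E) × ℝ) => (p.1 : E) + p.2 • ξ)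
      = (⇑Φ ∘ ⇑(WithLp.equiv 2 (((ℝ ∙ ξ)ᗮ : Submodule ℝ E) × ℝ)).symm) := by
    funext p
    exact (he₁ p).symm
  rw [hfun]
  exact h3

theorem volume_eq_lintegral_section (ξ : E) (hξ : ‖ξ‖ = 1) {S : Set E}
    (hS : MeasurableSet S) :
    volume S = ∫⁻ y : ((ℝ ∙ ξ)ᗮ : Submodule ℝ E), volume {t : ℝ | (y : E) + t • ξ ∈ S} := by
  have h := measurePreserving_orthoProd ξ hξ
  rw [← h.measure_preimage hS.nullMeasurableSet,
    Measure.prod_apply (h.measurable hS)]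
  rfl

end Helpers

theorem vol_inter_shift {B : Set ℝ} (hconv : Convex ℝ B) (hcomp : IsCompact B)
    {t : ℝ} (ht : 0 < t) :
    volume (B ∩ {s : ℝ | s - t ∈ B}) = ENNReal.ofReal ((volume B).toReal - t) := by
  rcases B.eq_empty_or_nonempty with h | h
  · rw [h]
    simp only [Set.empty_inter, measure_empty]
    rw [eq_comm, ENNReal.ofReal_eq_zero]
    simp only [ENNReal.toReal_zero]
    linarith
  · have hB := eq_Icc_of_connected_compact ⟨h, hconv.isPreconnected⟩ hcomp
    set a := sInf B with ha
    set b := sSup B with hb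
    have hab : a ≤ b := by
      obtain ⟨x, hx⟩ := h
      rw [hB] at hx
      exact le_trans hx.1 hx.2
    have h1 : {s : ℝ | s - t ∈ B} = Set.Icc (a + t) (b + t) := by
      ext s
      rw [hB]
      simp only [Set.mem_setOf_eq, Set.mem_Icc]
      constructor <;> rintro ⟨h1, h2⟩ <;> exact ⟨by linarith, by linarith⟩
    have h2 : B ∩ {s : ℝ | s - t ∈ B} = Set.Icc (a + t) b := by
      rw [h1, hB, Set.Icc_inter_Icc, max_eq_right (by linarith : a ≤ a + t),
        min_eq_left (by linarith : b ≤ b + t)]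
    rw [h2, hB, Real.volume_Icc, Real.volume_Icc, ENNReal.toReal_ofReal (by linarith)]
    congr 1
    ring

theorem real_int {c α : ℝ} (hc : 0 < c) (hα : 0 < α) :
    ∫ s in Set.Ioo (0:ℝ) c, s ^ (α - 1) * (c - s) = c ^ (α + 1) / (α * (α + 1)) := by
  have hi1 : IntervalIntegrable (fun s : ℝ => s ^ (α - 1)) volume 0 c :=
    intervalIntegral.intervalIntegrable_rpow' (by linarith)
  have hi2 : IntervalIntegrable (fun s : ℝ => s ^ α) volume 0 c :=
    intervalIntegral.intervalIntegrable_rpow' (by linarith)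
  have heq : Set.EqOn (fun s : ℝ => s ^ (α - 1) * (c - s))
      (fun s : ℝ => c * s ^ (α - 1) - s ^ α) (Set.uIcc 0 c) := by
    intro s hs
    rcases eq_or_ne s 0 with rfl | hs0
    · show (0:ℝ) ^ (α - 1) * (c - 0) = c * 0 ^ (α - 1) - 0 ^ α
      rw [Real.zero_rpow hα.ne']
      ring
    · have : s ^ α = s ^ (α - 1) * s := by
        rw [← Real.rpow_add_one hs0 (α - 1)]
        ring_nf
      simp only
      rw [this]
      ring
  rw [← integral_Ioc_eq_integral_Ioo, ← intervalIntegral.integral_of_le hc.le,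
    intervalIntegral.integral_congr heq,
    intervalIntegral.integral_sub ((hi1.const_mul c)) hi2,
    intervalIntegral.integral_const_mul,
    integral_rpow (Or.inl (by linarith)), integral_rpow (Or.inl (by linarith)),
    Real.zero_rpow (by linarith : α - 1 + 1 ≠ 0), Real.zero_rpow (by positivity : α + 1 ≠ 0)]
  have hca : c ^ (α + 1) = c ^ α * c := Real.rpow_add_one hc.ne' α
  have hca' : c ^ (α - 1 + 1) = c ^ α := by ring_nf
  rw [hca', hca]
  have hα0 : α ≠ 0 := hα.ne'
  have hα1 : α + 1 ≠ 0 := by positivity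
  field_simp
  linear_combination (c * c ^ α + α * c * c ^ α) * mul_inv_cancel₀ hα0

theorem key_int {c α : ℝ} (hc : 0 ≤ c) (hα : 0 < α) :
    ∫⁻ t in Set.Ioi (0:ℝ), (ENNReal.ofReal t) ^ (α - 1) * ENNReal.ofReal (c - t)
      = ENNReal.ofReal (c ^ (α + 1) / (α * (α + 1))) := by
  rcases hc.eq_or_lt with h | h
  · obtain rfl : c = 0 := h.symm
    have hz : ∀ t ∈ Set.Ioi (0:ℝ),
        (ENNReal.ofReal t) ^ (α - 1) * ENNReal.ofReal ((0:ℝ) - t) = 0 := by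
      intro t htt
      simp only [Set.mem_Ioi] at htt
      rw [show ENNReal.ofReal ((0:ℝ) - t) = 0 from ENNReal.ofReal_eq_zero.mpr (by linarith),
        mul_zero]
    rw [setLIntegral_congr_fun measurableSet_Ioi hz,
      lintegral_zero, Real.zero_rpow (by positivity : α + 1 ≠ 0), zero_div,
      ENNReal.ofReal_zero]
  · have hsplit : Set.Ioi (0:ℝ) = Set.Ioo 0 c ∪ Set.Ici c := by
      ext s
      simp only [Set.mem_Ioi, Set.mem_union, Set.mem_Ioo, Set.mem_Ici]
      constructor
      · intro hs
        rcases lt_or_ge s c with h' | h'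
        · exact Or.inl ⟨hs, h'⟩
        · exact Or.inr h'
      · rintro (⟨h1, _⟩ | h1) <;> linarith
    have hdisj : Disjoint (Set.Ioo (0:ℝ) c) (Set.Ici c) := by
      rw [Set.disjoint_left]
      rintro s ⟨_, h2⟩ h3
      exact absurd h3 (not_le.2 h2)
    rw [hsplit, lintegral_union measurableSet_Ici hdisj]
    have hz : ∀ t ∈ Set.Ici c,
        (ENNReal.ofReal t) ^ (α - 1) * ENNReal.ofReal (c - t) = 0 := by
      intro t htt
      simp only [Set.mem_Ici] at htt
      rw [show ENNReal.ofReal (c - t) = 0 from ENNReal.ofReal_eq_zero.mpr (by linarith),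
        mul_zero]
    rw [setLIntegral_congr_fun measurableSet_Ici hz,
      lintegral_zero, add_zero]
    have heq : ∀ t ∈ Set.Ioo (0:ℝ) c,
        (ENNReal.ofReal t) ^ (α - 1) * ENNReal.ofReal (c - t)
          = ENNReal.ofReal (t ^ (α - 1) * (c - t)) := by
      intro t htt
      rw [ENNReal.ofReal_rpow_of_pos htt.1,
        ← ENNReal.ofReal_mul (Real.rpow_nonneg htt.1.le _)]
    rw [setLIntegral_congr_fun measurableSet_Ioo heq]
    have hi1 : IntegrableOn (fun s : ℝ => s ^ (α - 1)) (Set.Ioo 0 c) volume := by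
      have := (intervalIntegral.intervalIntegrable_rpow' (a := 0) (b := c)
        (by linarith : (-1:ℝ) < α - 1))
      rw [intervalIntegrable_iff_integrableOn_Ioc_of_le hc] at this
      exact this.mono_set Set.Ioo_subset_Ioc_self
    have hi2 : IntegrableOn (fun s : ℝ => s ^ α) (Set.Ioo 0 c) volume := by
      have := (intervalIntegral.intervalIntegrable_rpow' (a := 0) (b := c)
        (by linarith : (-1:ℝ) < α))
      rw [intervalIntegrable_iff_integrableOn_Ioc_of_le hc] at this
      exact this.mono_set Set.Ioo_subset_Ioc_self
    have hint : IntegrableOn (fun s : ℝ => s ^ (α - 1) * (c - s)) (Set.Ioo 0 c) volume := by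
      apply (((hi1.const_mul c)).sub hi2).congr
      filter_upwards [ae_restrict_mem measurableSet_Ioo] with s hs
      have hsa : s ^ α = s ^ (α - 1) * s := by
        rw [← Real.rpow_add_one hs.1.ne' (α - 1)]
        ring_nf
      show c * s ^ (α - 1) - s ^ α = s ^ (α - 1) * (c - s)
      rw [hsa]
      ring
    have hnn : 0 ≤ᵐ[volume.restrict (Set.Ioo 0 c)] fun s : ℝ => s ^ (α - 1) * (c - s) := by
      filter_upwards [ae_restrict_mem measurableSet_Ioo] with s hs
      have h1 : (0:ℝ) ≤ s ^ (α - 1) := Real.rpow_nonneg hs.1.le _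
      have h2 : (0:ℝ) ≤ c - s := by linarith [hs.2]
      exact mul_nonneg h1 h2
    rw [← MeasureTheory.ofReal_integral_eq_lintegral_ofReal hint hnn, real_int h hα]

theorem radial_mean_body_identity_pos (n : ℕ) (hn : 1 ≤ n)
    (K : Set (EuclideanSpace ℝ (Fin n))) (hKconv : Convex ℝ K) (hKcomp : IsCompact K)
    (hKint : (interior K).Nonempty)
    (ξ : EuclideanSpace ℝ (Fin n)) (hξ : ξ ∈ sphere (0 : EuclideanSpace ℝ (Fin n)) 1)
    (α : ℝ) (hα : 0 < α) :
    ∫⁻ t in Set.Ioi (0 : ℝ), (ENNReal.ofReal t) ^ (α - 1) *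
        volume (K ∩ ((fun x => x + t • ξ) '' K)) =
      ENNReal.ofReal (1 / (α * (α + 1))) *
        ∫⁻ y : ((ℝ ∙ ξ)ᗮ : Submodule ℝ (EuclideanSpace ℝ (Fin n))),
          (volume {t : ℝ | (y : EuclideanSpace ℝ (Fin n)) + t • ξ ∈ K}) ^ (α + 1) := by
  classical
  have hξ1 : ‖ξ‖ = 1 := by simpa using hξ
  set W := ((ℝ ∙ ξ)ᗮ : Submodule ℝ (EuclideanSpace ℝ (Fin n))) with hWdef
  set A : W → Set ℝ := fun y => {t : ℝ | (y : EuclideanSpace ℝ (Fin n)) + t • ξ ∈ K} with hA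
  have hcont : ∀ y : W, Continuous fun t : ℝ => (y : EuclideanSpace ℝ (Fin n)) + t • ξ :=
    fun y => continuous_const.add (continuous_id.smul continuous_const)
  have hAconv : ∀ y, Convex ℝ (A y) := by
    intro y t1 ht1 t2 ht2 a b ha hb hab
    have hkey : a • ((y : EuclideanSpace ℝ (Fin n)) + t1 • ξ)
          + b • ((y : EuclideanSpace ℝ (Fin n)) + t2 • ξ)
        = (a + b) • (y : EuclideanSpace ℝ (Fin n)) + (a * t1 + b * t2) • ξ := by
      module
    have h2 := hKconv ht1 ht2 ha hb hab
    rw [hkey, hab, one_smul] at h2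
    exact h2
  have hAcl : ∀ y, IsClosed (A y) := fun y => hKcomp.isClosed.preimage (hcont y)
  obtain ⟨R, hR⟩ := hKcomp.isBounded.subset_closedBall 0
  have hAsub : ∀ y, A y ⊆ Set.Icc (-R) R := by
    intro y t htA
    have h1 : inner (𝕜 := ℝ) ((y : EuclideanSpace ℝ (Fin n)) + t • ξ) ξ = t := by
      rw [inner_add_left, real_inner_smul_left, inner_orthoComplement_zero ξ y,
        real_inner_self_eq_norm_sq, hξ1]
      ring
    have h2 : |t| ≤ ‖(y : EuclideanSpace ℝ (Fin n)) + t • ξ‖ := by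
      calc |t| = |inner (𝕜 := ℝ) ((y : EuclideanSpace ℝ (Fin n)) + t • ξ) ξ| := by rw [h1]
        _ ≤ ‖(y : EuclideanSpace ℝ (Fin n)) + t • ξ‖ * ‖ξ‖ := abs_real_inner_le_norm _ _
        _ = ‖(y : EuclideanSpace ℝ (Fin n)) + t • ξ‖ := by rw [hξ1, mul_one]
    have h3 : ‖(y : EuclideanSpace ℝ (Fin n)) + t • ξ‖ ≤ R := by
      have := hR htA
      simpa [mem_closedBall, dist_zero_right] using this
    exact abs_le.mp (le_trans h2 h3)
  have hAcomp : ∀ y, IsCompact (A y) :=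
    fun y => isCompact_Icc.of_isClosed_subset (hAcl y) (hAsub y)
  have hgfin : ∀ y, volume (A y) ≠ ⊤ := fun y => (hAcomp y).measure_lt_top.ne
  set f : W → ℝ := fun y => (volume (A y)).toReal with hf
  have hfnn : ∀ y, 0 ≤ f y := fun y => ENNReal.toReal_nonneg
  have hvolA : ∀ y, volume (A y) = ENNReal.ofReal (f y) :=
    fun y => (ENNReal.ofReal_toReal (hgfin y)).symm
  have hMS : MeasurableSet {p : W × ℝ | (p.1 : EuclideanSpace ℝ (Fin n)) + p.2 • ξ ∈ K} := by
    have hc : Continuous fun p : W × ℝ => (p.1 : EuclideanSpace ℝ (Fin n)) + p.2 • ξ :=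
      (continuous_subtype_val.comp continuous_fst).add (continuous_snd.smul continuous_const)
    exact (hKcomp.isClosed.preimage hc).measurableSet
  have hgmeas : Measurable fun y : W => volume (A y) :=
    measurable_measure_prodMk_left (ν := (volume : Measure ℝ)) hMS
  have hfmeas : Measurable f := hgmeas.ennreal_toReal
  have hstep : ∀ t ∈ Set.Ioi (0:ℝ),
      volume (K ∩ ((fun x => x + t • ξ) '' K)) = ∫⁻ y : W, ENNReal.ofReal (f y - t) := by
    intro t htpos
    simp only [Set.mem_Ioi] at htpos
    have himgK : IsCompact ((fun x => x + t • ξ) '' K) :=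
      hKcomp.image (continuous_id.add continuous_const)
    have hSmeas : MeasurableSet (K ∩ ((fun x => x + t • ξ) '' K)) :=
      hKcomp.isClosed.measurableSet.inter himgK.isClosed.measurableSet
    rw [volume_eq_lintegral_section ξ hξ1 hSmeas]
    refine lintegral_congr fun y => ?_
    have hsec : {s : ℝ |
          (y : EuclideanSpace ℝ (Fin n)) + s • ξ ∈ K ∩ ((fun x => x + t • ξ) '' K)}
        = A y ∩ {s : ℝ | s - t ∈ A y} := by
      ext s
      simp only [hA, Set.mem_inter_iff, Set.mem_setOf_eq]
      refine and_congr_right fun _ => ?_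
      constructor
      · rintro ⟨x, hx, hxe⟩
        have hx2 : x = (y : EuclideanSpace ℝ (Fin n)) + (s - t) • ξ := by
          linear_combination (norm := module) hxe
        rwa [← hx2]
      · intro hx
        refine ⟨(y : EuclideanSpace ℝ (Fin n)) + (s - t) • ξ, hx, ?_⟩
        show (y : EuclideanSpace ℝ (Fin n)) + (s - t) • ξ + t • ξ
          = (y : EuclideanSpace ℝ (Fin n)) + s • ξ
        module
    rw [hsec, vol_inter_shift (hAconv y) (hAcomp y) htpos]
  have hrfin : ∀ t : ℝ, 0 < t → (ENNReal.ofReal t) ^ (α - 1) ≠ ⊤ := by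
    intro t htpos
    rw [Ne, ENNReal.rpow_eq_top_iff]
    push_neg
    constructor
    · intro h0
      rw [ENNReal.ofReal_eq_zero] at h0
      linarith
    · intro h0
      exact absurd h0 ENNReal.ofReal_ne_top
  calc ∫⁻ t in Set.Ioi (0:ℝ), (ENNReal.ofReal t) ^ (α - 1) *
          volume (K ∩ ((fun x => x + t • ξ) '' K))
      = ∫⁻ t in Set.Ioi (0:ℝ), ∫⁻ y : W,
          (ENNReal.ofReal t) ^ (α - 1) * ENNReal.ofReal (f y - t) := by
        refine setLIntegral_congr_fun measurableSet_Ioi ?_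
        intro t htpos
        have htpos' : 0 < t := htpos
        dsimp only
        rw [hstep t htpos, lintegral_const_mul' _ _ (hrfin t htpos')]
    _ = ∫⁻ y : W, ∫⁻ t in Set.Ioi (0:ℝ),
          (ENNReal.ofReal t) ^ (α - 1) * ENNReal.ofReal (f y - t) := by
        apply lintegral_lintegral_swap
        apply Measurable.aemeasurable
        have m1 : Measurable fun p : ℝ × W => (ENNReal.ofReal p.1) ^ (α - 1) :=
          ENNReal.continuous_rpow_const.measurable.comp measurable_fst.ennreal_ofReal
        have m2 : Measurable fun p : ℝ × W => ENNReal.ofReal (f p.2 - p.1) :=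
          ((hfmeas.comp measurable_snd).sub measurable_fst).ennreal_ofReal
        exact m1.mul m2
    _ = ∫⁻ y : W, ENNReal.ofReal ((f y) ^ (α + 1) / (α * (α + 1))) :=
        lintegral_congr fun y => key_int (hfnn y) hα
    _ = ∫⁻ y : W, ENNReal.ofReal (1 / (α * (α + 1))) * ENNReal.ofReal ((f y) ^ (α + 1)) := by
        refine lintegral_congr fun y => ?_
        rw [← ENNReal.ofReal_mul (by positivity)]
        congr 1
        ring
    _ = ENNReal.ofReal (1 / (α * (α + 1))) * ∫⁻ y : W, ENNReal.ofReal ((f y) ^ (α + 1)) :=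
        lintegral_const_mul' _ _ ENNReal.ofReal_ne_top
    _ = ENNReal.ofReal (1 / (α * (α + 1))) *
          ∫⁻ y : W, (volume {t : ℝ | (y : EuclideanSpace ℝ (Fin n)) + t • ξ ∈ K}) ^ (α + 1) := by
        congr 1
        refine lintegral_congr fun y => ?_
        have : volume {t : ℝ | (y : EuclideanSpace ℝ (Fin n)) + t • ξ ∈ K} = volume (A y) := rfl
        rw [this, hvolA y, ENNReal.ofReal_rpow_of_nonneg (hfnn y) (by linarith)]
end

section
/- Let n ≥ 1, let E ⊂ ℝⁿ be a convex body (compact, convex, with non-empty interior), let ξ ∈ S^{n−1} and −1 < α < 0. Then ∫_0^∞ t^{α−1}·vol_n(E Δ (E + tξ)) dt = (−2/(α(α+1))) ∫_{ξ^⊥} μ₁({t ∈ ℝ : y + tξ ∈ E})^{α+1} dy, where E Δ F denotes the symmetric difference, the outer integral on the right is over the hyperplane ξ^⊥ with respect to its (n−1)-dimensional Lebesgue measure, and μ₁ denotes one-dimensional Lebesgue measure. -/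
open MeasureTheory Metric Set
open scoped ENNReal

lemma aux_interval (I : Set ℝ) (hI : Convex ℝ I) (hb : Bornology.IsBounded I)
    (t : ℝ) (ht : 0 < t) :
    volume (I \ {s | s - t ∈ I}) = min (ENNReal.ofReal t) (volume I) := by
  rcases I.eq_empty_or_nonempty with rfl | hne
  · simp
  set a := sInf I with ha
  set b := sSup I with hb'
  have hbdd_a : BddBelow I := hb.bddBelow
  have hbdd_b : BddAbove I := hb.bddAbove
  have hmem_le : ∀ x ∈ I, a ≤ x ∧ x ≤ b := fun x hx => ⟨csInf_le hbdd_a hx, le_csSup hbdd_b hx⟩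
  have hab : a ≤ b := Real.sInf_le_sSup _ hbdd_a hbdd_b
  have hIoo : Ioo a b ⊆ I := by
    intro x hx
    obtain ⟨u, hu, hux⟩ := exists_lt_of_csInf_lt hne hx.1
    obtain ⟨w, hw, hxw⟩ := exists_lt_of_lt_csSup hne hx.2
    exact hI.ordConnected.out hu hw ⟨hux.le, hxw.le⟩
  have hIcc : I ⊆ Icc a b := fun x hx => ⟨(hmem_le x hx).1, (hmem_le x hx).2⟩
  have hvolI : volume I = ENNReal.ofReal (b - a) := by
    refine le_antisymm ?_ ?_
    · calc volume I ≤ volume (Icc a b) := measure_mono hIcc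
        _ = ENNReal.ofReal (b - a) := Real.volume_Icc
    · calc ENNReal.ofReal (b - a) = volume (Ioo a b) := Real.volume_Ioo.symm
        _ ≤ volume I := measure_mono hIoo
  have h1 : Ioo a (min b (a + t)) ⊆ I \ {s | s - t ∈ I} := by
    rintro x ⟨hx1, hx2⟩
    rw [lt_min_iff] at hx2
    refine ⟨hIoo ⟨hx1, hx2.1⟩, fun hmem => ?_⟩
    have := (hmem_le _ hmem).1
    linarith [hx2.2]
  have h2 : I \ {s | s - t ∈ I} ⊆ Icc a (min b (a + t)) := by
    rintro x ⟨hx1, hx2⟩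
    refine ⟨(hmem_le x hx1).1, le_min (hmem_le x hx1).2 ?_⟩
    by_contra hcon
    push_neg at hcon
    exact hx2 (hIoo ⟨by linarith, by linarith [(hmem_le x hx1).2]⟩)
  have hvolD : volume (I \ {s | s - t ∈ I}) = ENNReal.ofReal (min b (a + t) - a) := by
    refine le_antisymm ?_ ?_
    · calc volume (I \ {s | s - t ∈ I}) ≤ volume (Icc a (min b (a + t))) := measure_mono h2
        _ = ENNReal.ofReal (min b (a + t) - a) := Real.volume_Icc
    · calc ENNReal.ofReal (min b (a + t) - a) = volume (Ioo a (min b (a + t))) :=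
          Real.volume_Ioo.symm
        _ ≤ volume (I \ {s | s - t ∈ I}) := measure_mono h1
  rw [hvolD, hvolI]
  rcases le_total b (a + t) with h | h
  · rw [min_eq_left h, min_eq_right (ENNReal.ofReal_le_ofReal (by linarith))]
  · rw [min_eq_right h, min_eq_left (ENNReal.ofReal_le_ofReal (by linarith))]
    congr 1
    ring

lemma aux_tint (α : ℝ) (hα₁ : -1 < α) (hα₂ : α < 0) (L : ℝ) (hL : 0 ≤ L) :
    ∫⁻ t in Set.Ioi (0:ℝ), (ENNReal.ofReal t) ^ (α - 1) *
        min (ENNReal.ofReal t) (ENNReal.ofReal L)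
      = ENNReal.ofReal (-1/(α*(α+1))) * (ENNReal.ofReal L) ^ (α+1) := by
  have hα0 : α ≠ 0 := hα₂.ne
  have hα1 : α + 1 ≠ 0 := by linarith
  rcases eq_or_lt_of_le hL with rfl | hLpos
  · rw [ENNReal.ofReal_zero, ENNReal.zero_rpow_of_pos (by linarith)]
    rw [mul_zero]
    rw [← lintegral_zero (μ := (volume : Measure ℝ).restrict (Ioi 0))]
    apply lintegral_congr
    intro t
    simp
  · have hsplit : Ioi (0:ℝ) = Ioc 0 L ∪ Ioi L := (Set.Ioc_union_Ioi_eq_Ioi hL).symm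
    rw [hsplit, lintegral_union measurableSet_Ioi (Set.Ioc_disjoint_Ioi le_rfl)]
    have hpart1 : ∫⁻ t in Ioc (0:ℝ) L, (ENNReal.ofReal t) ^ (α - 1) *
        min (ENNReal.ofReal t) (ENNReal.ofReal L) = ENNReal.ofReal (L^(α+1)/(α+1)) := by
      have hcong : ∀ t ∈ Ioc (0:ℝ) L, (ENNReal.ofReal t) ^ (α - 1) *
          min (ENNReal.ofReal t) (ENNReal.ofReal L) = ENNReal.ofReal (t ^ α) := by
        intro t ht
        rw [min_eq_left (ENNReal.ofReal_le_ofReal ht.2)]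
        rw [ENNReal.ofReal_rpow_of_pos ht.1, ← ENNReal.ofReal_mul (Real.rpow_nonneg ht.1.le _)]
        congr 1
        rw [← Real.rpow_add_one ht.1.ne' (α - 1)]
        ring_nf
      rw [setLIntegral_congr_fun measurableSet_Ioc hcong]
      rw [← ofReal_integral_eq_lintegral_ofReal]
      · congr 1
        rw [← intervalIntegral.integral_of_le hL, integral_rpow (Or.inl hα₁),
          Real.zero_rpow hα1]
        ring
      · exact (intervalIntegral.intervalIntegrable_rpow' hα₁).1
      · filter_upwards [ae_restrict_mem measurableSet_Ioc] with t ht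
        exact Real.rpow_nonneg ht.1.le _
    have hpart2 : ∫⁻ t in Ioi L, (ENNReal.ofReal t) ^ (α - 1) *
        min (ENNReal.ofReal t) (ENNReal.ofReal L) = ENNReal.ofReal (-L^α/α * L) := by
      have hcong : ∀ t ∈ Ioi L, (ENNReal.ofReal t) ^ (α - 1) *
          min (ENNReal.ofReal t) (ENNReal.ofReal L) =
          ENNReal.ofReal (t ^ (α-1)) * ENNReal.ofReal L := by
        intro t ht
        have htpos : 0 < t := lt_trans hLpos ht
        rw [min_eq_right (ENNReal.ofReal_le_ofReal (le_of_lt ht)),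
          ENNReal.ofReal_rpow_of_pos htpos]
      rw [setLIntegral_congr_fun measurableSet_Ioi hcong]
      rw [lintegral_mul_const _ ((measurable_id'.pow_const (α-1)).ennreal_ofReal)]
      rw [← ofReal_integral_eq_lintegral_ofReal]
      · rw [← ENNReal.ofReal_mul ?hnn]
        case hnn =>
          rw [integral_Ioi_rpow_of_lt (by linarith) hLpos]
          have h' : α - 1 + 1 = α := by ring
          rw [h']
          exact (div_pos_of_neg_of_neg (neg_lt_zero.mpr (Real.rpow_pos_of_pos hLpos α)) hα₂).le
        congr 1
        rw [integral_Ioi_rpow_of_lt (by linarith) hLpos]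
        have h' : α - 1 + 1 = α := by ring
        rw [h']
      · exact integrableOn_Ioi_rpow_of_lt (by linarith) hLpos
      · filter_upwards [ae_restrict_mem measurableSet_Ioi] with t ht
        exact Real.rpow_nonneg (by linarith [ht.out] : (0:ℝ) ≤ t) _
    rw [hpart1, hpart2, ← ENNReal.ofReal_add ?h1 ?h2]
    case h1 => exact div_nonneg (Real.rpow_nonneg hL _) (by linarith)
    case h2 =>
      have h4 : (0:ℝ) ≤ -L^α/α :=
        (div_pos_of_neg_of_neg (neg_lt_zero.mpr (Real.rpow_pos_of_pos hLpos α)) hα₂).le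
      exact mul_nonneg h4 hL
    rw [ENNReal.ofReal_rpow_of_pos hLpos, ← ENNReal.ofReal_mul
      (div_pos_of_neg_of_neg (by norm_num) (mul_neg_of_neg_of_pos hα₂ (by linarith))).le]
    congr 1
    have hLa : L ^ (α+1) = L ^ α * L := Real.rpow_add_one (ne_of_gt hLpos) α
    have h1 : -L^α/α * L = -(L^(α+1))/α := by
      rw [hLa]; ring
    rw [h1]
    field_simp
    ring

set_option maxHeartbeats 1000000 in
theorem radial_mean_body_identity_neg (n : ℕ) (hn : 1 ≤ n)
    (K : Set (EuclideanSpace ℝ (Fin n))) (hKconv : Convex ℝ K) (hKcomp : IsCompact K)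
    (hKint : (interior K).Nonempty)
    (ξ : EuclideanSpace ℝ (Fin n)) (hξ : ξ ∈ sphere (0 : EuclideanSpace ℝ (Fin n)) 1)
    (α : ℝ) (hα₁ : -1 < α) (hα₂ : α < 0) :
    ∫⁻ t in Set.Ioi (0 : ℝ), (ENNReal.ofReal t) ^ (α - 1) *
        volume ((K \ ((fun x => x + t • ξ) '' K)) ∪ (((fun x => x + t • ξ) '' K) \ K)) =
      ENNReal.ofReal (-2 / (α * (α + 1))) *
        ∫⁻ y : ((ℝ ∙ ξ)ᗮ : Submodule ℝ (EuclideanSpace ℝ (Fin n))),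
          (volume {t : ℝ | (y : EuclideanSpace ℝ (Fin n)) + t • ξ ∈ K}) ^ (α + 1) := by
  obtain ⟨m, rfl⟩ : ∃ m, n = m + 1 := ⟨n - 1, (Nat.succ_pred_eq_of_pos hn).symm⟩
  have hξ1 : ‖ξ‖ = 1 := by simpa using mem_sphere_zero_iff_norm.mp hξ
  have hξ0 : ξ ≠ 0 := by intro h; rw [h, norm_zero] at hξ1; norm_num at hξ1
  set V := ((ℝ ∙ ξ)ᗮ : Submodule ℝ (EuclideanSpace ℝ (Fin (m+1)))) with hV
  have hrank : Module.finrank ℝ V = m := by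
    have h1 : Module.finrank ℝ (ℝ ∙ ξ) = 1 := finrank_span_singleton hξ0
    have h2 := Submodule.finrank_add_finrank_orthogonal
      (K := ((ℝ ∙ ξ) : Submodule ℝ (EuclideanSpace ℝ (Fin (m+1)))))
    rw [h1, finrank_euclideanSpace, Fintype.card_fin] at h2
    rw [hV]; omega
  let b₀ : OrthonormalBasis (Fin m) ℝ V := (stdOrthonormalBasis ℝ V).reindex (finCongr hrank)
  let v : Fin (m+1) → EuclideanSpace ℝ (Fin (m+1)) :=
    Fin.cons ξ (fun i => (b₀ i : EuclideanSpace ℝ (Fin (m+1))))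
  have hv : Orthonormal ℝ v := by
    rw [orthonormal_iff_ite]
    intro i j
    refine Fin.cases ?_ ?_ i <;> [skip; intro i'] <;> refine Fin.cases ?_ ?_ j <;> try intro j'
    · simp only [v, Fin.cons_zero]
      rw [if_pos trivial, real_inner_self_eq_norm_sq, hξ1, one_pow]
    · simp only [v, Fin.cons_zero, Fin.cons_succ]
      rw [if_neg (Fin.succ_ne_zero j').symm]
      exact ((b₀ j').2 ξ (Submodule.mem_span_singleton_self ξ))
    · simp only [v, Fin.cons_zero, Fin.cons_succ]
      rw [if_neg (Fin.succ_ne_zero i')]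
      rw [real_inner_comm]
      exact ((b₀ i').2 ξ (Submodule.mem_span_singleton_self ξ))
    · simp only [v, Fin.cons_succ]
      rw [← Submodule.coe_inner]
      have := orthonormal_iff_ite.mp b₀.orthonormal i' j'
      rw [this]
      simp [Fin.succ_inj]
  let B : OrthonormalBasis (Fin (m+1)) ℝ (EuclideanSpace ℝ (Fin (m+1))) :=
    (basisOfLinearIndependentOfCardEqFinrank hv.linearIndependent
      (by simp [finrank_euclideanSpace])).toOrthonormalBasis
      (by rwa [coe_basisOfLinearIndependentOfCardEqFinrank])
  have hB : ∀ i, B i = v i := by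
    intro i
    rw [Module.Basis.coe_toOrthonormalBasis, coe_basisOfLinearIndependentOfCardEqFinrank]
  have hφ : MeasurePreserving (fun p : V × ℝ => (p.1 : EuclideanSpace ℝ (Fin (m+1))) + p.2 • ξ)
      volume volume := by
    have m1 : MeasurePreserving (fun y : V => WithLp.equiv 2 (Fin m → ℝ) (b₀.repr y))
        volume volume :=
      (PiLp.volume_preserving_ofLp (Fin m)).comp b₀.measurePreserving_repr
    have m2 := m1.prod (MeasurePreserving.id (volume : Measure ℝ))
    have m3 : MeasurePreserving (Prod.swap : (Fin m → ℝ) × ℝ → ℝ × (Fin m → ℝ))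
        volume volume := by
      rw [Measure.volume_eq_prod, Measure.volume_eq_prod]
      exact Measure.measurePreserving_swap
    have m4 := (volume_preserving_piFinSuccAbove (fun _ : Fin (m+1) => ℝ) 0).symm
    have m5 := PiLp.volume_preserving_toLp (Fin (m+1))
    have m6 := (B.repr.symm :
      EuclideanSpace ℝ (Fin (m+1)) ≃ₗᵢ[ℝ] EuclideanSpace ℝ (Fin (m+1))).measurePreserving
    have mtot := m6.comp (m5.comp (m4.comp (m3.comp m2)))
    convert mtot using 1
    case e'_3 => rfl
    case e'_4 => rfl
    case e'_6 => rfl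
    funext p
    show (p.1 : EuclideanSpace ℝ (Fin (m+1))) + p.2 • ξ = B.repr.symm _
    apply B.repr.injective
    rw [LinearIsometryEquiv.apply_symm_apply]
    ext i
    have hcoord : ∀ i, B.repr ((p.1 : EuclideanSpace ℝ (Fin (m+1))) + p.2 • ξ) i
        = (Fin.cons p.2 (fun j => b₀.repr p.1 j) : Fin (m+1) → ℝ) i := by
      intro i
      rw [OrthonormalBasis.repr_apply_apply, hB]
      refine Fin.cases ?_ ?_ i
      · simp only [v, Fin.cons_zero]
        rw [inner_add_right, inner_smul_right]
        rw [(p.1).2 ξ (Submodule.mem_span_singleton_self ξ)]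
        rw [real_inner_self_eq_norm_sq, hξ1]
        norm_num
      · intro j
        simp only [v, Fin.cons_succ]
        rw [inner_add_right, inner_smul_right]
        have h1 : (inner ℝ (↑(b₀ j)) ξ : ℝ) = 0 := by
          rw [real_inner_comm]
          exact (b₀ j).2 ξ (Submodule.mem_span_singleton_self ξ)
        have h2 : (inner ℝ ((b₀ j : EuclideanSpace ℝ (Fin (m+1))))
            (p.1 : EuclideanSpace ℝ (Fin (m+1))) : ℝ) = b₀.repr p.1 j := by
          rw [← Submodule.coe_inner, ← OrthonormalBasis.repr_apply_apply]
        rw [h1, h2]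
        ring
    rw [hcoord]
    show (Fin.cons p.2 (fun j => b₀.repr p.1 j) : Fin (m+1) → ℝ) i
      = ((MeasurableEquiv.piFinSuccAbove (fun _ : Fin (m+1) => ℝ) 0).symm
        (p.2, fun j => b₀.repr p.1 j)) i
    simp [Fin.insertNthEquiv, Fin.insertNth_zero']
  -- basic facts about K
  have hKmeas : MeasurableSet K := hKcomp.isClosed.measurableSet
  have hKfin : volume K ≠ ⊤ := hKcomp.measure_lt_top.ne
  obtain ⟨R, hR⟩ := hKcomp.isBounded.subset_closedBall 0
  set ℓ : V → ℝ≥0∞ :=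
    fun y => volume {s : ℝ | (y : EuclideanSpace ℝ (Fin (m+1))) + s • ξ ∈ K} with hℓdef
  have hpre : MeasurableSet
      ((fun p : V × ℝ => (p.1 : EuclideanSpace ℝ (Fin (m+1))) + p.2 • ξ) ⁻¹' K) :=
    hφ.measurable hKmeas
  have hℓmeas : Measurable ℓ := measurable_measure_prodMk_left hpre
  have hIconv : ∀ y : V, Convex ℝ {s : ℝ | (y : EuclideanSpace ℝ (Fin (m+1))) + s • ξ ∈ K} := by
    intro y
    have hset : {s : ℝ | (y : EuclideanSpace ℝ (Fin (m+1))) + s • ξ ∈ K}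
        = (AffineMap.lineMap (y : EuclideanSpace ℝ (Fin (m+1)))
            ((y : EuclideanSpace ℝ (Fin (m+1))) + ξ)) ⁻¹' K := by
      ext s
      simp only [mem_setOf_eq, mem_preimage, AffineMap.lineMap_apply]
      have : s • ((y : EuclideanSpace ℝ (Fin (m+1))) + ξ -ᵥ (y : EuclideanSpace ℝ (Fin (m+1))))
          +ᵥ (y : EuclideanSpace ℝ (Fin (m+1)))
          = (y : EuclideanSpace ℝ (Fin (m+1))) + s • ξ := by
        simp only [vsub_eq_sub, vadd_eq_add, add_sub_cancel_left]
        abel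
      rw [this]
    rw [hset]
    exact hKconv.affine_preimage _
  have hIsub : ∀ y : V, {s : ℝ | (y : EuclideanSpace ℝ (Fin (m+1))) + s • ξ ∈ K}
      ⊆ Icc (-(R + ‖(y : EuclideanSpace ℝ (Fin (m+1)))‖))
          (R + ‖(y : EuclideanSpace ℝ (Fin (m+1)))‖) := by
    intro y s hs
    have h1 : ‖(y : EuclideanSpace ℝ (Fin (m+1))) + s • ξ‖ ≤ R := by
      have := hR hs
      simpa [mem_closedBall, dist_eq_norm] using this
    have h2 : |s| ≤ R + ‖(y : EuclideanSpace ℝ (Fin (m+1)))‖ := by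
      have hnorm : ‖s • ξ‖ = |s| := by
        rw [norm_smul, hξ1, mul_one, Real.norm_eq_abs]
      calc |s| = ‖s • ξ‖ := hnorm.symm
        _ = ‖((y : EuclideanSpace ℝ (Fin (m+1))) + s • ξ)
              - (y : EuclideanSpace ℝ (Fin (m+1)))‖ := by rw [add_sub_cancel_left]
        _ ≤ ‖(y : EuclideanSpace ℝ (Fin (m+1))) + s • ξ‖
              + ‖(y : EuclideanSpace ℝ (Fin (m+1)))‖ := norm_sub_le _ _
        _ ≤ R + ‖(y : EuclideanSpace ℝ (Fin (m+1)))‖ := by linarith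
    rw [abs_le] at h2
    exact ⟨h2.1, h2.2⟩
  have hIbdd : ∀ y : V,
      Bornology.IsBounded {s : ℝ | (y : EuclideanSpace ℝ (Fin (m+1))) + s • ξ ∈ K} :=
    fun y => (Metric.isBounded_Icc _ _).subset (hIsub y)
  have hℓfin : ∀ y : V, ℓ y ≠ ⊤ := by
    intro y
    refine ((measure_mono (hIsub y)).trans_lt ?_).ne
    rw [Real.volume_Icc]
    exact ENNReal.ofReal_lt_top
  -- the section identity
  have hsec : ∀ t : ℝ, 0 < t →
      volume ((K \ ((fun x => x + t • ξ) '' K)) ∪ (((fun x => x + t • ξ) '' K) \ K))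
        = 2 * ∫⁻ y : V, min (ENNReal.ofReal t) (ℓ y) := by
    intro t ht
    set T := (fun x => x + t • ξ) '' K with hT
    have hTpre : T = (fun x => x + (-(t • ξ))) ⁻¹' K := by
      rw [hT, Set.image_add_right]
    have hTmeas : MeasurableSet T := by
      rw [hTpre]; exact (measurable_add_const _) hKmeas
    have hTvol : volume T = volume K := by
      rw [hTpre]; exact measure_preimage_add_right _ _ _
    have hinterfin : volume (K ∩ T) ≠ ⊤ :=
      (lt_of_le_of_lt (measure_mono Set.inter_subset_left) hKcomp.measure_lt_top).ne
    have e1 := measure_diff_add_inter K (μ := volume) hTmeas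
    have e2 := measure_diff_add_inter T (μ := volume) hKmeas
    rw [Set.inter_comm T K, hTvol] at e2
    have hsymm : volume (T \ K) = volume (K \ T) := by
      have h1 : volume (T \ K) = volume K - volume (K ∩ T) :=
        ENNReal.eq_sub_of_add_eq hinterfin e2
      have h2 : volume (K \ T) = volume K - volume (K ∩ T) :=
        ENNReal.eq_sub_of_add_eq hinterfin e1
      rw [h1, h2]
    have hKTmeas : MeasurableSet (K \ T) := hKmeas.diff hTmeas
    have hunion : volume ((K \ T) ∪ (T \ K)) = volume (K \ T) + volume (T \ K) :=
      measure_union disjoint_sdiff_sdiff (hTmeas.diff hKmeas)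
    have hfub : volume (K \ T)
        = ∫⁻ y : V, volume {s : ℝ | (y : EuclideanSpace ℝ (Fin (m+1))) + s • ξ ∈ K \ T} := by
      rw [← hφ.measure_preimage hKTmeas.nullMeasurableSet]
      rw [Measure.volume_eq_prod, Measure.prod_apply (hφ.measurable hKTmeas)]
      rfl
    have hTiff : ∀ (y : V) (s : ℝ),
        ((y : EuclideanSpace ℝ (Fin (m+1))) + s • ξ ∈ T)
          ↔ ((y : EuclideanSpace ℝ (Fin (m+1))) + (s - t) • ξ ∈ K) := by
      intro y s
      rw [hTpre, mem_preimage]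
      have : (y : EuclideanSpace ℝ (Fin (m+1))) + s • ξ + (-(t • ξ))
          = (y : EuclideanSpace ℝ (Fin (m+1))) + (s - t) • ξ := by
        rw [sub_smul]; abel
      rw [this]
    have hsect : ∀ y : V, {s : ℝ | (y : EuclideanSpace ℝ (Fin (m+1))) + s • ξ ∈ K \ T}
        = {s : ℝ | (y : EuclideanSpace ℝ (Fin (m+1))) + s • ξ ∈ K}
          \ {s : ℝ | s - t ∈ {u : ℝ | (y : EuclideanSpace ℝ (Fin (m+1))) + u • ξ ∈ K}} := by
      intro y
      ext s
      simp only [mem_diff, mem_setOf_eq, hTiff y s]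
    have hval : ∀ y : V,
        volume {s : ℝ | (y : EuclideanSpace ℝ (Fin (m+1))) + s • ξ ∈ K \ T}
          = min (ENNReal.ofReal t) (ℓ y) := by
      intro y
      rw [hsect y]
      exact aux_interval _ (hIconv y) (hIbdd y) t ht
    rw [hunion, hsymm, hfub, lintegral_congr hval, two_mul]
  -- main computation
  calc
    ∫⁻ t in Set.Ioi (0 : ℝ), (ENNReal.ofReal t) ^ (α - 1) *
        volume ((K \ ((fun x => x + t • ξ) '' K)) ∪ (((fun x => x + t • ξ) '' K) \ K))
      = ∫⁻ t in Set.Ioi (0 : ℝ),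
          2 * ((ENNReal.ofReal t) ^ (α - 1) * ∫⁻ y : V, min (ENNReal.ofReal t) (ℓ y)) := by
        refine setLIntegral_congr_fun measurableSet_Ioi (fun t ht => ?_)
        rw [hsec t ht]
        ring
    _ = 2 * ∫⁻ t in Set.Ioi (0 : ℝ),
          (ENNReal.ofReal t) ^ (α - 1) * ∫⁻ y : V, min (ENNReal.ofReal t) (ℓ y) :=
        lintegral_const_mul' 2 _ (by norm_num)
    _ = 2 * ∫⁻ t in Set.Ioi (0 : ℝ),
          ∫⁻ y : V, (ENNReal.ofReal t) ^ (α - 1) * min (ENNReal.ofReal t) (ℓ y) := by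
        congr 1
        refine lintegral_congr fun t => ?_
        rw [lintegral_const_mul _ (measurable_const.min hℓmeas)]
    _ = 2 * ∫⁻ y : V,
          ∫⁻ t in Set.Ioi (0 : ℝ), (ENNReal.ofReal t) ^ (α - 1)
            * min (ENNReal.ofReal t) (ℓ y) := by
        congr 1
        refine lintegral_lintegral_swap ?_
        exact (((measurable_fst.ennreal_ofReal.pow_const _).mul
          (measurable_fst.ennreal_ofReal.min (hℓmeas.comp measurable_snd)))).aemeasurable
    _ = 2 * ∫⁻ y : V, ENNReal.ofReal (-1/(α*(α+1))) * (ℓ y) ^ (α+1) := by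
        congr 1
        refine lintegral_congr fun y => ?_
        have hLrepr : ℓ y = ENNReal.ofReal (ℓ y).toReal := (ENNReal.ofReal_toReal (hℓfin y)).symm
        rw [hLrepr]
        exact aux_tint α hα₁ hα₂ _ ENNReal.toReal_nonneg
    _ = ENNReal.ofReal (-2 / (α * (α + 1))) * ∫⁻ y : V, (ℓ y) ^ (α + 1) := by
        rw [lintegral_const_mul' _ _ ENNReal.ofReal_ne_top, ← mul_assoc]
        congr 1
        rw [show (2:ℝ≥0∞) = ENNReal.ofReal 2 by simp,
          ← ENNReal.ofReal_mul (by norm_num)]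
        congr 1
        ring
end

section
/- Let ω:[0,∞)→[0,∞) be decreasing with 0 < ∫_0^∞ t^{α−1}ω(t)dt < ∞ for every α > 0, and let φ:[0,∞)→[0,∞) be not identically zero with φ(0)=0, such that t ↦ φ(t) and t ↦ φ(t)/t are increasing on (0,∞). Then the function ζ(α) = ( ∫_0^∞ t^{α−1}ω(φ(t))dt / ∫_0^∞ t^{α−1}ω(t)dt )^{1/α} is decreasing on (0,∞): for all 0 < α < β, ζ(β) ≤ ζ(α). Moreover, if φ(t) = λt on [0,∞) for some λ > 0, then ζ is constant on (0,∞). -/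
open MeasureTheory Set

/-- The Milman–Pajor quotient `ζ(α)`. -/
noncomputable def zetaMP (ω φ : ℝ → ℝ) (a : ℝ) : ℝ :=
  ((∫ t in Set.Ioi (0 : ℝ), t ^ (a - 1) * ω (φ t)) /
    (∫ t in Set.Ioi (0 : ℝ), t ^ (a - 1) * ω t)) ^ (1 / a)

namespace MPaux

/-- Scaling identity: `∫ t^(b-1) ω(c t) = c^(-b) ∫ t^(b-1) ω(t)`. -/
theorem scale_integral (ω : ℝ → ℝ) {c : ℝ} (hc : 0 < c) (b : ℝ) :
    ∫ t in Ioi (0 : ℝ), t ^ (b - 1) * ω (c * t) =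
      c ^ (-b) * ∫ t in Ioi (0 : ℝ), t ^ (b - 1) * ω t := by
  have h := MeasureTheory.integral_comp_mul_left_Ioi (fun x => x ^ (b - 1) * ω x) 0 hc
  rw [mul_zero] at h
  have h2 : (∫ x in Ioi (0 : ℝ), (fun x => x ^ (b - 1) * ω x) (c * x)) =
      ∫ x in Ioi (0 : ℝ), c ^ (b - 1) * (x ^ (b - 1) * ω (c * x)) := by
    refine setIntegral_congr_fun measurableSet_Ioi (fun x hx => ?_)
    simp only
    rw [Real.mul_rpow hc.le (le_of_lt hx)]
    ring
  rw [h2, MeasureTheory.integral_const_mul, smul_eq_mul] at h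
  have hcb : (c : ℝ) ^ (b - 1) ≠ 0 := (Real.rpow_pos_of_pos hc _).ne'
  have key : (∫ x in Ioi (0 : ℝ), x ^ (b - 1) * ω (c * x)) =
      (c ^ (b - 1))⁻¹ * (c⁻¹ * ∫ x in Ioi (0 : ℝ), x ^ (b - 1) * ω x) :=
    (eq_inv_mul_iff_mul_eq₀ hcb).mpr h
  rw [key, show c ^ (-b) = (c ^ (b - 1))⁻¹ * c⁻¹ by
    rw [show (-b : ℝ) = -(b - 1) + (-1) by ring, Real.rpow_add hc, Real.rpow_neg hc.le,
      Real.rpow_neg_one], mul_assoc]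

theorem scale_integrable (ω : ℝ → ℝ) {c : ℝ} (hc : 0 < c) (b : ℝ)
    (h : IntegrableOn (fun t => t ^ (b - 1) * ω t) (Ioi 0)) :
    IntegrableOn (fun t => t ^ (b - 1) * ω (c * t)) (Ioi 0) := by
  have h1 : IntegrableOn (fun x => (c * x) ^ (b - 1) * ω (c * x)) (Ioi 0) := by
    refine (MeasureTheory.integrableOn_Ioi_comp_mul_left_iff
      (fun x => x ^ (b - 1) * ω x) 0 hc).mpr ?_
    simpa using h
  have h2 := h1.const_mul (c ^ (1 - b))
  refine (IntegrableOn.congr_fun h2 (fun x hx => ?_) measurableSet_Ioi)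
  have hx0 : (0 : ℝ) < x := hx
  show c ^ (1 - b) * ((c * x) ^ (b - 1) * ω (c * x)) = x ^ (b - 1) * ω (c * x)
  rw [Real.mul_rpow hc.le hx0.le]
  rw [show c ^ (1 - b) * (c ^ (b - 1) * x ^ (b - 1) * ω (c * x)) =
    (c ^ (1 - b) * c ^ (b - 1)) * (x ^ (b - 1) * ω (c * x)) by ring,
    ← Real.rpow_add hc]
  norm_num

end MPaux

open MPaux

theorem milman_pajor (ω φ : ℝ → ℝ)
    (hω_nonneg : ∀ t, 0 ≤ t → 0 ≤ ω t)
    (hω_dec : AntitoneOn ω (Set.Ici 0))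
    (hω_int : ∀ a : ℝ, 0 < a → IntegrableOn (fun t => t ^ (a - 1) * ω t) (Set.Ioi 0) ∧
      0 < ∫ t in Set.Ioi (0 : ℝ), t ^ (a - 1) * ω t)
    (hφ_nonneg : ∀ t, 0 ≤ t → 0 ≤ φ t) (hφ_zero : φ 0 = 0)
    (hφ_nonzero : ∃ t, 0 ≤ t ∧ φ t ≠ 0)
    (hφ_mono : MonotoneOn φ (Set.Ioi 0))
    (hφ_div_mono : MonotoneOn (fun t => φ t / t) (Set.Ioi 0)) :
    (∀ a b : ℝ, 0 < a → a < b → zetaMP ω φ b ≤ zetaMP ω φ a) ∧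
    (∀ lam : ℝ, 0 < lam → (∀ t, 0 ≤ t → φ t = lam * t) →
      ∀ a b : ℝ, 0 < a → 0 < b → zetaMP ω φ a = zetaMP ω φ b) := by
  -- a point where φ is positive
  obtain ⟨t1, ht1nn, hφt1ne⟩ := hφ_nonzero
  have ht1 : 0 < t1 := by
    rcases ht1nn.lt_or_eq with h | h
    · exact h
    · subst h
      exact absurd hφ_zero hφt1ne
  have hφt1 : 0 < φ t1 := (hφ_nonneg t1 ht1nn).lt_of_ne (Ne.symm hφt1ne)
  set m : ℝ := φ t1 / t1 with hm_def
  have hm : 0 < m := div_pos hφt1 ht1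
  -- φ t ≥ m * t for t ≥ t1
  have hφ_lower : ∀ t, t1 ≤ t → m * t ≤ φ t := by
    intro t ht
    have ht0 : (0 : ℝ) < t := lt_of_lt_of_le ht1 ht
    have := hφ_div_mono (mem_Ioi.mpr ht1) (mem_Ioi.mpr ht0) ht
    calc m * t ≤ (φ t / t) * t := by
          exact mul_le_mul_of_nonneg_right this ht0.le
      _ = φ t := div_mul_cancel₀ (φ t) ht0.ne'
  -- φ t ≤ (φ s / s) * t for 0 < t ≤ s
  have hφ_upper : ∀ s t, 0 < t → t ≤ s → φ t ≤ (φ s / s) * t := by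
    intro s t ht hts
    have hs : (0 : ℝ) < s := lt_of_lt_of_le ht hts
    have := hφ_div_mono (mem_Ioi.mpr ht) (mem_Ioi.mpr hs) hts
    calc φ t = (φ t / t) * t := (div_mul_cancel₀ (φ t) ht.ne').symm
      _ ≤ (φ s / s) * t := mul_le_mul_of_nonneg_right this ht.le
  -- ω (φ t) ≤ ω 0 for t ≥ 0
  have hω0 : ∀ t, 0 ≤ t → ω (φ t) ≤ ω 0 :=
    fun t ht => hω_dec (self_mem_Ici) (mem_Ici.mpr (hφ_nonneg t ht)) (hφ_nonneg t ht)
  -- measurability of ω ∘ φ on Ioi 0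
  have hmeasφ : AEMeasurable (fun t => ω (φ t)) (volume.restrict (Ioi (0 : ℝ))) := by
    have h1 : AntitoneOn (fun t => ω (φ t)) (Ioi 0) := by
      intro s hs t ht hst
      exact hω_dec (mem_Ici.mpr (hφ_nonneg s (le_of_lt hs)))
        (mem_Ici.mpr (hφ_nonneg t (le_of_lt ht))) (hφ_mono hs ht hst)
    exact aemeasurable_restrict_of_antitoneOn measurableSet_Ioi h1
  have hmeasr : ∀ b : ℝ, AEMeasurable (fun t : ℝ => t ^ (b - 1))
      (volume.restrict (Ioi (0 : ℝ))) := by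
    intro b
    refine ContinuousOn.aemeasurable ?_ measurableSet_Ioi
    intro x hx
    exact (Real.continuousAt_rpow_const x _ (Or.inl (ne_of_gt hx))).continuousWithinAt
  have hmeasF : ∀ b : ℝ, AEStronglyMeasurable (fun t : ℝ => t ^ (b - 1) * ω (φ t))
      (volume.restrict (Ioi (0 : ℝ))) :=
    fun b => ((hmeasr b).mul hmeasφ).aestronglyMeasurable
  -- Integrability of t^(b-1) ω(φ t)
  have hF_int : ∀ b : ℝ, 0 < b →
      IntegrableOn (fun t => t ^ (b - 1) * ω (φ t)) (Ioi 0) := by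
    intro b hb
    have hsplit : Ioc (0 : ℝ) t1 ∪ Ioi t1 = Ioi (0 : ℝ) := Ioc_union_Ioi_eq_Ioi ht1.le
    rw [← hsplit]
    have hIoc : IntegrableOn (fun t => t ^ (b - 1) * ω (φ t)) (Ioc 0 t1) := by
      have hrpow : IntegrableOn (fun t : ℝ => t ^ (b - 1)) (Ioc 0 t1) := by
        have := intervalIntegral.intervalIntegrable_rpow' (a := 0) (b := t1)
          (r := b - 1) (by linarith)
        rwa [intervalIntegrable_iff_integrableOn_Ioc_of_le ht1.le] at this
      have hg : IntegrableOn (fun t : ℝ => t ^ (b - 1) * ω 0) (Ioc 0 t1) :=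
        hrpow.mul_const (ω 0)
      refine Integrable.mono hg ((hmeasF b).mono_measure
        (Measure.restrict_mono Ioc_subset_Ioi_self le_rfl)) ?_
      filter_upwards [ae_restrict_mem measurableSet_Ioc] with t ht
      have ht0 : (0 : ℝ) < t := ht.1
      have h1 : 0 ≤ t ^ (b - 1) := Real.rpow_nonneg ht0.le _
      have h2 : 0 ≤ ω (φ t) := hω_nonneg _ (hφ_nonneg t ht0.le)
      have h3 : 0 ≤ ω 0 := hω_nonneg 0 le_rfl
      rw [Real.norm_eq_abs, Real.norm_eq_abs, abs_of_nonneg (mul_nonneg h1 h2),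
        abs_of_nonneg (mul_nonneg h1 h3)]
      exact mul_le_mul_of_nonneg_left (hω0 t ht0.le) h1
    have hIoi : IntegrableOn (fun t => t ^ (b - 1) * ω (φ t)) (Ioi t1) := by
      have hg : IntegrableOn (fun t : ℝ => t ^ (b - 1) * ω (m * t)) (Ioi 0) :=
        scale_integrable ω hm b (hω_int b hb).1
      refine Integrable.mono (hg.mono_set (Ioi_subset_Ioi ht1.le))
        ((hmeasF b).mono_measure (Measure.restrict_mono (Ioi_subset_Ioi ht1.le) le_rfl)) ?_
      filter_upwards [ae_restrict_mem measurableSet_Ioi] with t ht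
      have ht0 : (0 : ℝ) < t := lt_trans ht1 ht
      have hmt : 0 ≤ m * t := mul_nonneg hm.le ht0.le
      have h1 : 0 ≤ t ^ (b - 1) := Real.rpow_nonneg ht0.le _
      have h2 : 0 ≤ ω (φ t) := hω_nonneg _ (hφ_nonneg t ht0.le)
      have h3 : 0 ≤ ω (m * t) := hω_nonneg _ hmt
      have h4 : ω (φ t) ≤ ω (m * t) :=
        hω_dec (mem_Ici.mpr hmt) (mem_Ici.mpr (hφ_nonneg t ht0.le)) (hφ_lower t (le_of_lt ht))
      rw [Real.norm_eq_abs, Real.norm_eq_abs, abs_of_nonneg (mul_nonneg h1 h2),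
        abs_of_nonneg (mul_nonneg h1 h3)]
      exact mul_le_mul_of_nonneg_left h4 h1
    exact hIoc.union hIoi
  -- Positivity of F b
  have hF_pos : ∀ b : ℝ, 0 < b →
      0 < ∫ t in Ioi (0 : ℝ), t ^ (b - 1) * ω (φ t) := by
    intro b hb
    -- ω is positive somewhere
    have hts : ∃ ts, 0 < ts ∧ 0 < ω ts := by
      by_contra hcon
      push_neg at hcon
      have hzero : ∀ t ∈ Ioi (0 : ℝ), t ^ (b - 1) * ω t = 0 := by
        intro t ht
        have : ω t = 0 := le_antisymm (hcon t ht) (hω_nonneg t (le_of_lt ht))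
        rw [this, mul_zero]
      have := (hω_int b hb).2
      rw [setIntegral_congr_fun measurableSet_Ioi hzero] at this
      simp at this
    obtain ⟨ts, hts0, hωts⟩ := hts
    set ε : ℝ := min t1 (ts / (2 * m)) with hε_def
    have hε : 0 < ε := lt_min ht1 (div_pos hts0 (by linarith))
    have hφ_small : ∀ t, 0 < t → t ≤ ε → φ t ≤ ts := by
      intro t ht htε
      have h1 : φ t ≤ m * t := by
        have := hφ_upper t1 t ht (le_trans htε (min_le_left _ _))
        rwa [← hm_def] at this
      have h2 : m * t ≤ m * (ts / (2 * m)) :=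
        mul_le_mul_of_nonneg_left (le_trans htε (min_le_right _ _)) hm.le
      have h3 : m * (ts / (2 * m)) = ts / 2 := by
        field_simp
      nlinarith
    set δ : ℝ := min ((ε / 2) ^ (b - 1)) (ε ^ (b - 1)) with hδ_def
    have hδ : 0 < δ := lt_min (Real.rpow_pos_of_pos (by linarith) _)
      (Real.rpow_pos_of_pos hε _)
    have hbound : ∀ t ∈ Ioc (ε / 2) ε, δ * ω ts ≤ t ^ (b - 1) * ω (φ t) := by
      intro t ht
      have ht0 : (0 : ℝ) < t := lt_trans (by linarith) ht.1
      have hωφ : ω ts ≤ ω (φ t) :=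
        hω_dec (mem_Ici.mpr (hφ_nonneg t ht0.le)) (mem_Ici.mpr hts0.le)
          (hφ_small t ht0 ht.2)
      have hδt : δ ≤ t ^ (b - 1) := by
        rcases le_or_gt 0 (b - 1) with hb1 | hb1
        · refine le_trans (min_le_left _ _) ?_
          exact Real.rpow_le_rpow (by linarith) ht.1.le hb1
        · refine le_trans (min_le_right _ _) ?_
          exact Real.rpow_le_rpow_of_nonpos ht0 ht.2 hb1.le
      exact mul_le_mul hδt hωφ (hω_nonneg ts hts0.le)
        (Real.rpow_nonneg ht0.le _)
    have hnonneg : ∀ t ∈ Ioi (0 : ℝ), 0 ≤ t ^ (b - 1) * ω (φ t) := by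
      intro t ht
      exact mul_nonneg (Real.rpow_nonneg (le_of_lt ht) _)
        (hω_nonneg _ (hφ_nonneg t (le_of_lt ht)))
    have h1 : (∫ t in Ioc (ε / 2) ε, t ^ (b - 1) * ω (φ t)) ≤
        ∫ t in Ioi (0 : ℝ), t ^ (b - 1) * ω (φ t) := by
      refine setIntegral_mono_set (hF_int b hb) ?_ ?_
      · filter_upwards [ae_restrict_mem measurableSet_Ioi] with t ht
        exact hnonneg t ht
      · refine Filter.Eventually.of_forall ?_
        intro t ht
        exact mem_Ioi.mpr (lt_trans (by linarith) ht.1)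
    have h2 : δ * ω ts * (volume (Ioc (ε / 2) ε)).toReal ≤
        ∫ t in Ioc (ε / 2) ε, t ^ (b - 1) * ω (φ t) := by
      refine setIntegral_ge_of_const_le_real measurableSet_Ioc measure_Ioc_lt_top.ne hbound ?_
      exact (hF_int b hb).mono_set (fun t ht => mem_Ioi.mpr (lt_trans (by linarith) ht.1))
    have h3 : 0 < δ * ω ts * (volume (Ioc (ε / 2) ε)).toReal := by
      refine mul_pos (mul_pos hδ hωts) ?_
      rw [Real.volume_Ioc]
      rw [ENNReal.toReal_ofReal (by linarith)]
      linarith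
    linarith
  -- Main monotonicity claim about integrals
  constructor
  · intro a b ha hab
    have hb : (0 : ℝ) < b := lt_trans ha hab
    set Fa := ∫ t in Ioi (0 : ℝ), t ^ (a - 1) * ω (φ t) with hFa_def
    set Ga := ∫ t in Ioi (0 : ℝ), t ^ (a - 1) * ω t with hGa_def
    set Fb := ∫ t in Ioi (0 : ℝ), t ^ (b - 1) * ω (φ t) with hFb_def
    set Gb := ∫ t in Ioi (0 : ℝ), t ^ (b - 1) * ω t with hGb_def
    have hFa : 0 < Fa := hF_pos a ha
    have hGa : 0 < Ga := (hω_int a ha).2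
    have hFb : 0 < Fb := hF_pos b hb
    have hGb : 0 < Gb := (hω_int b hb).2
    set c : ℝ := (Ga / Fa) ^ (1 / a) with hc_def
    have hc : 0 < c := Real.rpow_pos_of_pos (div_pos hGa hFa) _
    -- ∫ t^(a-1) ω(c t) = Fa
    have hkey_a : (∫ t in Ioi (0 : ℝ), t ^ (a - 1) * ω (c * t)) = Fa := by
      rw [scale_integral ω hc a]
      have : c ^ (-a) = Fa / Ga := by
        rw [hc_def, ← Real.rpow_mul (div_pos hGa hFa).le,
          show (1 / a) * (-a) = -1 by field_simp, Real.rpow_neg_one, inv_div]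
      rw [this]
      exact div_mul_cancel₀ Fa hGa.ne'
    have hSca_int : IntegrableOn (fun t => t ^ (a - 1) * ω (c * t)) (Ioi 0) :=
      scale_integrable ω hc a (hω_int a ha).1
    have hScb_int : IntegrableOn (fun t => t ^ (b - 1) * ω (c * t)) (Ioi 0) :=
      scale_integrable ω hc b (hω_int b hb).1
    have hΔa_int : IntegrableOn
        (fun t => t ^ (a - 1) * ω (φ t) - t ^ (a - 1) * ω (c * t)) (Ioi 0) :=
      (hF_int a ha).sub hSca_int
    have hΔb_int : IntegrableOn
        (fun t => t ^ (b - 1) * ω (φ t) - t ^ (b - 1) * ω (c * t)) (Ioi 0) :=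
      (hF_int b hb).sub hScb_int
    have hzero : (∫ t in Ioi (0 : ℝ),
        (t ^ (a - 1) * ω (φ t) - t ^ (a - 1) * ω (c * t))) = 0 := by
      rw [integral_sub (hF_int a ha) hSca_int, hkey_a, ← hFa_def, sub_self]
    -- sign structure
    set A : Set ℝ := {t | 0 < t ∧ φ t ≤ c * t} with hA_def
    have hsA : ∀ t ∈ A, ∀ s, 0 < s → s ≤ t → φ s ≤ c * s := by
      intro t ht s hs hst
      have ht0 : (0 : ℝ) < t := ht.1
      have h1 : φ s ≤ (φ t / t) * s := hφ_upper t s hs hst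
      have h2 : φ t / t ≤ c := (div_le_iff₀ ht0).mpr (by linarith [ht.2])
      nlinarith
    have hΔ_nonneg : ∀ t, 0 < t → φ t ≤ c * t →
        0 ≤ ω (φ t) - ω (c * t) := by
      intro t ht h
      have : ω (c * t) ≤ ω (φ t) :=
        hω_dec (mem_Ici.mpr (hφ_nonneg t ht.le))
          (mem_Ici.mpr (mul_nonneg hc.le ht.le)) h
      linarith
    have hΔ_nonpos : ∀ t, 0 < t → c * t ≤ φ t →
        ω (φ t) - ω (c * t) ≤ 0 := by
      intro t ht h
      have : ω (φ t) ≤ ω (c * t) :=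
        hω_dec (mem_Ici.mpr (mul_nonneg hc.le ht.le))
          (mem_Ici.mpr (hφ_nonneg t ht.le)) h
      linarith
    -- the crucial estimate: ∫ t^(b-1) Δ ≤ 0
    have hmain : (∫ t in Ioi (0 : ℝ),
        (t ^ (b - 1) * ω (φ t) - t ^ (b - 1) * ω (c * t))) ≤ 0 := by
      by_cases hAne : A.Nonempty
      · by_cases hAbdd : BddAbove A
        · -- finite crossing point
          set t0 : ℝ := sSup A with ht0_def
          obtain ⟨s₀, hs₀⟩ := id hAne
          have ht0pos : 0 < t0 := lt_of_lt_of_le hs₀.1 (le_csSup hAbdd hs₀)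
          have hlt : ∀ t, 0 < t → t < t0 → φ t ≤ c * t := by
            intro t ht htt0
            obtain ⟨s, hsA', hts⟩ := exists_lt_of_lt_csSup hAne htt0
            exact hsA s hsA' t ht hts.le
          have hgt : ∀ t, t0 < t → c * t ≤ φ t := by
            intro t htt0
            by_contra hcon
            push_neg at hcon
            have : t ∈ A := ⟨lt_trans ht0pos htt0, hcon.le⟩
            exact absurd (le_csSup hAbdd this) (not_le.mpr htt0)
          have hpt : ∀ t ∈ Ioi (0 : ℝ),
              t ^ (b - 1) * ω (φ t) - t ^ (b - 1) * ω (c * t) ≤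
              t0 ^ (b - a) * (t ^ (a - 1) * ω (φ t) - t ^ (a - 1) * ω (c * t)) := by
            intro t ht
            have ht' : (0 : ℝ) < t := ht
            have hsplit : t ^ (b - 1) = t ^ (b - a) * t ^ (a - 1) := by
              rw [← Real.rpow_add ht']; ring_nf
            have e1 : t ^ (b - 1) * ω (φ t) - t ^ (b - 1) * ω (c * t) =
                t ^ (b - a) * (t ^ (a - 1) * (ω (φ t) - ω (c * t))) := by
              rw [hsplit]; ring
            have e2 : t0 ^ (b - a) * (t ^ (a - 1) * ω (φ t) - t ^ (a - 1) * ω (c * t)) =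
                t0 ^ (b - a) * (t ^ (a - 1) * (ω (φ t) - ω (c * t))) := by ring
            rw [e1, e2]
            rcases lt_trichotomy t t0 with h | h | h
            · have hΔ : 0 ≤ ω (φ t) - ω (c * t) := hΔ_nonneg t ht' (hlt t ht' h)
              have h1 : t ^ (b - a) ≤ t0 ^ (b - a) :=
                Real.rpow_le_rpow ht'.le h.le (by linarith)
              have h2 : 0 ≤ t ^ (a - 1) * (ω (φ t) - ω (c * t)) :=
                mul_nonneg (Real.rpow_nonneg ht'.le _) hΔ
              exact mul_le_mul_of_nonneg_right h1 h2
            · rw [h]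
            · have hΔ : ω (φ t) - ω (c * t) ≤ 0 := hΔ_nonpos t ht' (hgt t h)
              have h1 : t0 ^ (b - a) ≤ t ^ (b - a) :=
                Real.rpow_le_rpow ht0pos.le h.le (by linarith)
              have h2 : t ^ (a - 1) * (ω (φ t) - ω (c * t)) ≤ 0 :=
                mul_nonpos_of_nonneg_of_nonpos (Real.rpow_nonneg ht'.le _) hΔ
              exact mul_le_mul_of_nonpos_right h1 h2
          have hg_int : IntegrableOn (fun t =>
              t0 ^ (b - a) * (t ^ (a - 1) * ω (φ t) - t ^ (a - 1) * ω (c * t))) (Ioi 0) :=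
            hΔa_int.const_mul _
          have := setIntegral_mono_on hΔb_int hg_int measurableSet_Ioi hpt
          rw [MeasureTheory.integral_const_mul, hzero, mul_zero] at this
          exact this
        · -- A unbounded: φ t ≤ c t everywhere, integrand a.e. zero
          have hall : ∀ t, 0 < t → φ t ≤ c * t := by
            intro t ht
            obtain ⟨s, hsA', hts⟩ := not_bddAbove_iff.mp hAbdd t
            exact hsA s hsA' t ht hts.le
          have hnn : 0 ≤ᵐ[volume.restrict (Ioi (0 : ℝ))]
              fun t => t ^ (a - 1) * ω (φ t) - t ^ (a - 1) * ω (c * t) := by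
            filter_upwards [ae_restrict_mem measurableSet_Ioi] with t ht
            have ht' : (0 : ℝ) < t := ht
            have := hΔ_nonneg t ht' (hall t ht')
            have h1 : 0 ≤ t ^ (a - 1) := Real.rpow_nonneg ht'.le _
            simp only [Pi.zero_apply]
            nlinarith [mul_nonneg h1 this]
          have haez := (MeasureTheory.integral_eq_zero_iff_of_nonneg_ae hnn hΔa_int).mp hzero
          have haezb : (fun t => t ^ (b - 1) * ω (φ t) - t ^ (b - 1) * ω (c * t))
              =ᵐ[volume.restrict (Ioi (0 : ℝ))] 0 := by
            filter_upwards [haez, ae_restrict_mem measurableSet_Ioi] with t h0 ht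
            have ht' : (0 : ℝ) < t := ht
            have hpa : (0 : ℝ) < t ^ (a - 1) := Real.rpow_pos_of_pos ht' _
            have hΔ0 : ω (φ t) - ω (c * t) = 0 := by
              have h0' : t ^ (a - 1) * (ω (φ t) - ω (c * t)) = 0 := by
                rw [mul_sub]; exact h0
              rcases mul_eq_zero.mp h0' with h | h
              · exact absurd h hpa.ne'
              · exact h
            simp only [Pi.zero_apply]
            rw [← mul_sub, hΔ0, mul_zero]
          rw [MeasureTheory.integral_congr_ae haezb]
          simp
      · -- A empty: c t < φ t everywhere, integrand nonpositive
        have hall : ∀ t, 0 < t → c * t ≤ φ t := by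
          intro t ht
          by_contra hcon
          push_neg at hcon
          exact hAne ⟨t, ht, hcon.le⟩
        refine setIntegral_nonpos measurableSet_Ioi (fun t ht => ?_)
        have ht' : (0 : ℝ) < t := ht
        have := hΔ_nonpos t ht' (hall t ht')
        have h1 : 0 ≤ t ^ (b - 1) := Real.rpow_nonneg ht'.le _
        nlinarith
    -- conclude
    have hFb_le : Fb ≤ c ^ (-b) * Gb := by
      have h1 : Fb - (∫ t in Ioi (0 : ℝ), t ^ (b - 1) * ω (c * t)) ≤ 0 := by
        rw [← integral_sub (hF_int b hb) hScb_int]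
        exact hmain
      have h2 := scale_integral ω hc b
      rw [← hGb_def] at h2
      rw [h2] at h1
      linarith
    have hζa : zetaMP ω φ a = c⁻¹ := by
      unfold zetaMP
      rw [← hFa_def, ← hGa_def, hc_def,
        ← Real.inv_rpow (div_pos hGa hFa).le, inv_div]
    have hζb_le : zetaMP ω φ b ≤ c⁻¹ := by
      unfold zetaMP
      rw [← hFb_def, ← hGb_def]
      have h1 : Fb / Gb ≤ c ^ (-b) := (div_le_iff₀ hGb).mpr hFb_le
      have h2 : (Fb / Gb) ^ (1 / b) ≤ (c ^ (-b)) ^ (1 / b) :=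
        Real.rpow_le_rpow (div_nonneg hFb.le hGb.le) h1 (by positivity)
      have h3 : (c ^ (-b)) ^ (1 / b) = c⁻¹ := by
        rw [← Real.rpow_mul hc.le, show (-b) * (1 / b) = -1 by field_simp,
          Real.rpow_neg_one]
      rwa [h3] at h2
    rw [hζa]
    exact hζb_le
  · -- λ t case
    intro lam hlam hφ_eq a b ha hb
    have key : ∀ x : ℝ, 0 < x → zetaMP ω φ x = lam⁻¹ := by
      intro x hx
      have hGx : 0 < ∫ t in Ioi (0 : ℝ), t ^ (x - 1) * ω t := (hω_int x hx).2
      have hcongr : (∫ t in Ioi (0 : ℝ), t ^ (x - 1) * ω (φ t)) =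
          ∫ t in Ioi (0 : ℝ), t ^ (x - 1) * ω (lam * t) := by
        refine setIntegral_congr_fun measurableSet_Ioi (fun t ht => ?_)
        rw [hφ_eq t (le_of_lt ht)]
      unfold zetaMP
      rw [hcongr, scale_integral ω hlam x]
      rw [mul_div_assoc, div_self hGx.ne', mul_one]
      rw [← Real.rpow_mul hlam.le, show (-x) * (1 / x) = -1 by field_simp,
        Real.rpow_neg_one]
    rw [key a ha, key b hb]
end

section
/- Let ω:[0,∞)→[0,∞) be decreasing with 0 < ∫_0^∞ t^{α−1}(ω(0)−ω(t))dt < ∞ for every α ∈ (−1,0), and let φ:[0,∞)→[0,∞) be not identically zero with φ(0)=0, such that t ↦ φ(t) and t ↦ φ(t)/t are increasing on (0,∞). Then for all −1 < α < β < 0, ( ∫_0^∞ t^{β−1}(ω(0)−ω(φ(t)))dt / ∫_0^∞ t^{β−1}(ω(0)−ω(t))dt )^{1/β} ≤ ( ∫_0^∞ t^{α−1}(ω(0)−ω(φ(t)))dt / ∫_0^∞ t^{α−1}(ω(0)−ω(t))dt )^{1/α}. -/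
open MeasureTheory Set

/-- The extended Milman–Pajor quotient `ζ(α)` for negative exponents `α ∈ (−1,0)`. -/
noncomputable def zetaMPneg (ω φ : ℝ → ℝ) (a : ℝ) : ℝ :=
  ((∫ t in Set.Ioi (0 : ℝ), t ^ (a - 1) * (ω 0 - ω (φ t))) /
    (∫ t in Set.Ioi (0 : ℝ), t ^ (a - 1) * (ω 0 - ω t))) ^ (1 / a)

/-- Scaling identity and integrability for the substitution `t ↦ lam * t`. -/
lemma mp_scale (ω : ℝ → ℝ) {α lam : ℝ} (hlam : 0 < lam)
    (hJ : IntegrableOn (fun t => t ^ (α - 1) * (ω 0 - ω t)) (Set.Ioi 0)) :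
    IntegrableOn (fun t => t ^ (α - 1) * (ω 0 - ω (lam * t))) (Set.Ioi 0) ∧
    ∫ t in Set.Ioi (0 : ℝ), t ^ (α - 1) * (ω 0 - ω (lam * t))
      = lam ^ (-α) * ∫ t in Set.Ioi (0 : ℝ), t ^ (α - 1) * (ω 0 - ω t) := by
  have hcomp : IntegrableOn
      (fun x => (lam * x) ^ (α - 1) * (ω 0 - ω (lam * x))) (Set.Ioi 0) := by
    have := (integrableOn_Ioi_comp_mul_left_iff
      (fun u => u ^ (α - 1) * (ω 0 - ω u)) 0 hlam).mpr (by rw [mul_zero]; exact hJ)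
    exact this
  have key : EqOn (fun t => t ^ (α - 1) * (ω 0 - ω (lam * t)))
      (fun t => lam ^ ((1 : ℝ) - α) * ((lam * t) ^ (α - 1) * (ω 0 - ω (lam * t))))
      (Set.Ioi 0) := by
    intro t ht
    have htp : (0 : ℝ) < t := ht
    have h1 : (lam * t) ^ (α - 1) = lam ^ (α - 1) * t ^ (α - 1) :=
      Real.mul_rpow hlam.le htp.le
    have h2 : lam ^ ((1 : ℝ) - α) * lam ^ (α - 1) = 1 := by
      rw [← Real.rpow_add hlam]; norm_num
    simp only [h1]
    linear_combination (-(t ^ (α - 1) * (ω 0 - ω (lam * t)))) * h2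
  have hint : IntegrableOn (fun t => t ^ (α - 1) * (ω 0 - ω (lam * t))) (Set.Ioi 0) :=
    IntegrableOn.congr_fun (hcomp.const_mul (lam ^ ((1 : ℝ) - α))) key.symm measurableSet_Ioi
  refine ⟨hint, ?_⟩
  have h3 : lam ^ ((1 : ℝ) - α) * lam⁻¹ = lam ^ (-α) := by
    rw [← Real.rpow_neg_one lam, ← Real.rpow_add hlam]
    congr 1; ring
  calc ∫ t in Set.Ioi (0 : ℝ), t ^ (α - 1) * (ω 0 - ω (lam * t))
      = ∫ t in Set.Ioi (0 : ℝ),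
          lam ^ ((1 : ℝ) - α) * ((lam * t) ^ (α - 1) * (ω 0 - ω (lam * t))) :=
        setIntegral_congr_fun measurableSet_Ioi key
    _ = lam ^ ((1 : ℝ) - α) *
          ∫ t in Set.Ioi (0 : ℝ), (lam * t) ^ (α - 1) * (ω 0 - ω (lam * t)) :=
        integral_const_mul _ _
    _ = lam ^ ((1 : ℝ) - α) *
          (lam⁻¹ * ∫ u in Set.Ioi (0 : ℝ), u ^ (α - 1) * (ω 0 - ω u)) := by
        rw [integral_comp_mul_left_Ioi (fun u => u ^ (α - 1) * (ω 0 - ω u)) 0 hlam,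
          mul_zero, smul_eq_mul]
    _ = lam ^ (-α) * ∫ u in Set.Ioi (0 : ℝ), u ^ (α - 1) * (ω 0 - ω u) := by
        rw [← mul_assoc, h3]

set_option maxHeartbeats 1000000 in
theorem milman_pajor_negative (ω φ : ℝ → ℝ)
    (hω_nonneg : ∀ t, 0 ≤ t → 0 ≤ ω t)
    (hω_dec : AntitoneOn ω (Set.Ici 0))
    (hω_int : ∀ a : ℝ, -1 < a → a < 0 →
      IntegrableOn (fun t => t ^ (a - 1) * (ω 0 - ω t)) (Set.Ioi 0) ∧
      0 < ∫ t in Set.Ioi (0 : ℝ), t ^ (a - 1) * (ω 0 - ω t))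
    (hφ_nonneg : ∀ t, 0 ≤ t → 0 ≤ φ t) (hφ_zero : φ 0 = 0)
    (hφ_nonzero : ∃ t, 0 ≤ t ∧ φ t ≠ 0)
    (hφ_mono : MonotoneOn φ (Set.Ioi 0))
    (hφ_div_mono : MonotoneOn (fun t => φ t / t) (Set.Ioi 0)) :
    ∀ a b : ℝ, -1 < a → a < b → b < 0 → zetaMPneg ω φ b ≤ zetaMPneg ω φ a := by
  intro a b ha hab hb
  have ha0 : a < 0 := hab.trans hb
  have hb1 : -1 < b := ha.trans hab
  have hane : a ≠ 0 := ne_of_lt ha0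
  have hbne : b ≠ 0 := ne_of_lt hb
  have hφpos : ∀ t ∈ Set.Ioi (0 : ℝ), 0 ≤ φ t := fun t ht => hφ_nonneg t (le_of_lt ht)
  have hωle : ∀ s t : ℝ, 0 ≤ s → s ≤ t → ω t ≤ ω s := fun s t hs hst =>
    hω_dec (mem_Ici.mpr hs) (mem_Ici.mpr (hs.trans hst)) hst
  have hωφ_le : ∀ t ∈ Set.Ioi (0 : ℝ), ω (φ t) ≤ ω 0 := fun t ht =>
    hωle 0 (φ t) le_rfl (hφpos t ht)
  -- measurability
  have hmeas : ∀ e : ℝ, AEStronglyMeasurable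
      (fun t => t ^ (e - 1) * (ω 0 - ω (φ t))) (volume.restrict (Set.Ioi 0)) := by
    intro e
    have hmono : MonotoneOn (fun t => ω 0 - ω (φ t)) (Set.Ioi 0) := by
      intro s hs t ht hst
      have h1 : φ s ≤ φ t := hφ_mono hs ht hst
      have h2 := hω_dec (mem_Ici.mpr (hφpos s hs)) (mem_Ici.mpr (hφpos t ht)) h1
      simp only
      linarith
    have h1 : AEMeasurable (fun t => ω 0 - ω (φ t)) (volume.restrict (Set.Ioi 0)) :=
      aemeasurable_restrict_of_monotoneOn measurableSet_Ioi hmono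
    have h2 : Measurable fun t : ℝ => t ^ (e - 1) := by fun_prop
    exact (h2.aemeasurable.mul h1).aestronglyMeasurable
  -- the point where φ is nonzero
  obtain ⟨t0, ht0nn, ht0ne⟩ := hφ_nonzero
  have ht0pos : 0 < t0 := by
    rcases eq_or_lt_of_le ht0nn with h | h
    · rw [← h] at ht0ne; exact absurd hφ_zero ht0ne
    · exact h
  have hφt0 : 0 < φ t0 := lt_of_le_of_ne (hφ_nonneg t0 ht0nn) (Ne.symm ht0ne)
  have hlin : ∀ t, t0 ≤ t → (φ t0 / t0) * t ≤ φ t := by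
    intro t ht
    have htpos : 0 < t := lt_of_lt_of_le ht0pos ht
    have h1 : φ t0 / t0 ≤ φ t / t :=
      hφ_div_mono (mem_Ioi.mpr ht0pos) (mem_Ioi.mpr htpos) ht
    calc (φ t0 / t0) * t ≤ (φ t / t) * t := mul_le_mul_of_nonneg_right h1 htpos.le
      _ = φ t := div_mul_cancel₀ _ (ne_of_gt htpos)
  have hJa := hω_int a ha ha0
  have hJb := hω_int b hb1 hb
  -- existence of a drop point of ω
  have hsdrop : ∃ s, 0 < s ∧ ω s < ω 0 := by
    by_contra h
    push_neg at h
    have heq : EqOn (fun t => t ^ (b - 1) * (ω 0 - ω t)) (fun _ => (0 : ℝ))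
        (Set.Ioi 0) := by
      intro t ht
      have h1 := h t ht
      have h2 : ω t ≤ ω 0 := hωle 0 t le_rfl (le_of_lt ht)
      have h3 : ω 0 - ω t = 0 := by linarith
      simp only [h3, mul_zero]
    have h0 : (∫ t in Set.Ioi (0 : ℝ), t ^ (b - 1) * (ω 0 - ω t)) = 0 := by
      rw [setIntegral_congr_fun measurableSet_Ioi heq]
      simp
    exact absurd h0 (ne_of_gt hJb.2)
  -- integrability of the numerator integrand
  have intI : ∀ e : ℝ, -1 < e → e < 0 →
      IntegrableOn (fun t => t ^ (e - 1) * (ω 0 - ω (φ t))) (Set.Ioi 0) := by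
    intro e he1 he0
    have hJe := (hω_int e he1 he0).1
    rw [show Set.Ioi (0 : ℝ) = Set.Ioc 0 1 ∪ Set.Ioi 1 from
      (Set.Ioc_union_Ioi_eq_Ioi zero_le_one).symm]
    apply IntegrableOn.union
    · rcases eq_or_lt_of_le (hφ_nonneg 1 zero_le_one) with hC | hC
      · -- φ 1 = 0, hence φ vanishes on (0,1]
        have hz : EqOn (fun _ => (0 : ℝ)) (fun t => t ^ (e - 1) * (ω 0 - ω (φ t)))
            (Set.Ioc 0 1) := by
          intro t ht
          have h1 : φ t / t ≤ φ 1 / 1 :=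
            hφ_div_mono (mem_Ioi.mpr ht.1) (mem_Ioi.mpr one_pos) ht.2
        
          rw [← hC] at h1
          have h1' : φ t / t ≤ 0 := by simpa using h1
          have h2 : φ t ≤ 0 := by
            by_contra hcon
            push_neg at hcon
            have := div_pos hcon ht.1
            linarith
          have h3 : φ t = 0 := le_antisymm h2 (hφpos t ht.1)
          simp only [h3, sub_self, mul_zero]
        exact (integrableOn_zero).congr_fun hz measurableSet_Ioc
      · -- φ 1 > 0 : dominate by t ↦ t^(e-1)*(ω 0 - ω (φ 1 * t)) near 0
        have hdom := (mp_scale ω hC hJe).1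
        have hdom' : IntegrableOn (fun t => t ^ (e - 1) * (ω 0 - ω (φ 1 * t)))
            (Set.Ioc 0 1) := hdom.mono_set Set.Ioc_subset_Ioi_self
        refine Integrable.mono' hdom'
          ((hmeas e).mono_measure (Measure.restrict_mono Set.Ioc_subset_Ioi_self le_rfl))
          ?_
        refine (ae_restrict_iff' measurableSet_Ioc).mpr (ae_of_all _ fun t ht => ?_)
        have htp : (0 : ℝ) < t := ht.1
        have h1 : φ t / t ≤ φ 1 / 1 :=
          hφ_div_mono (mem_Ioi.mpr htp) (mem_Ioi.mpr one_pos) ht.2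
        have h2 : φ t ≤ φ 1 * t := by
          have := mul_le_mul_of_nonneg_right h1 htp.le
          rw [div_mul_cancel₀ _ (ne_of_gt htp)] at this
          simpa [div_one] using this
        have h3 : ω (φ 1 * t) ≤ ω (φ t) := hωle (φ t) (φ 1 * t) (hφpos t htp) h2
        have h4 : ω (φ t) ≤ ω 0 := hωφ_le t htp
        have h5 : 0 ≤ t ^ (e - 1) := Real.rpow_nonneg htp.le _
        rw [Real.norm_eq_abs, abs_of_nonneg (mul_nonneg h5 (by linarith))]
        apply mul_le_mul_of_nonneg_left _ h5
        linarith
    · -- tail : dominate by c * t^(e-1)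
      have hc0 : 0 ≤ ω 0 := hω_nonneg 0 le_rfl
      have hIoi : IntegrableOn (fun t => ω 0 * t ^ (e - 1)) (Set.Ioi 1) :=
        (integrableOn_Ioi_rpow_of_lt (by linarith) one_pos).const_mul _
      refine Integrable.mono' hIoi
        ((hmeas e).mono_measure (Measure.restrict_mono (Set.Ioi_subset_Ioi zero_le_one) le_rfl))
        ?_
      refine (ae_restrict_iff' measurableSet_Ioi).mpr (ae_of_all _ fun t ht => ?_)
      have htp : (0 : ℝ) < t := lt_trans one_pos ht
      have h4 : ω (φ t) ≤ ω 0 := hωφ_le t htp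
      have h6 : 0 ≤ ω (φ t) := hω_nonneg (φ t) (hφpos t htp)
      have h5 : 0 ≤ t ^ (e - 1) := Real.rpow_nonneg htp.le _
      rw [Real.norm_eq_abs, abs_of_nonneg (mul_nonneg h5 (by linarith))]
      rw [mul_comm (ω 0)]
      apply mul_le_mul_of_nonneg_left _ h5
      linarith
  -- positivity of the numerator
  have posI : ∀ e : ℝ, -1 < e → e < 0 →
      0 < ∫ t in Set.Ioi (0 : ℝ), t ^ (e - 1) * (ω 0 - ω (φ t)) := by
    intro e he1 he0
    obtain ⟨s, hs0, hsc⟩ := hsdrop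
    have hnn : 0 ≤ᵐ[volume.restrict (Set.Ioi 0)]
        fun t => t ^ (e - 1) * (ω 0 - ω (φ t)) := by
      refine (ae_restrict_iff' measurableSet_Ioi).mpr (ae_of_all _ fun t ht => ?_)
      exact mul_nonneg (Real.rpow_nonneg (le_of_lt ht) _)
        (sub_nonneg.mpr (hωφ_le t ht))
    rw [setIntegral_pos_iff_support_of_nonneg_ae hnn (intI e he1 he0)]
    set T := max t0 (s * t0 / φ t0) with hT
    have hTpos : 0 < T := lt_of_lt_of_le ht0pos (le_max_left _ _)
    have hsub : Set.Ioi T ⊆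
        (Function.support fun t => t ^ (e - 1) * (ω 0 - ω (φ t))) ∩ Set.Ioi 0 := by
      intro t ht
      have htT : T < t := ht
      have htpos : 0 < t := hTpos.trans htT
      have h1 : t0 ≤ t := le_trans (le_max_left _ _) (le_of_lt htT)
      have h2 : s * t0 / φ t0 < t := lt_of_le_of_lt (le_max_right _ _) htT
      have h3 : s ≤ φ t := by
        have h4 := hlin t h1
        have h2' : s * t0 < t * φ t0 := (div_lt_iff₀ hφt0).mp h2
        have h5 : s < φ t0 / t0 * t := by
          rw [div_mul_eq_mul_div, lt_div_iff₀ ht0pos]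
          nlinarith
        linarith
      have h6 : ω (φ t) ≤ ω s := hωle s (φ t) hs0.le h3
      refine ⟨Function.mem_support.mpr (ne_of_gt ?_), htpos⟩
      exact mul_pos (Real.rpow_pos_of_pos htpos _) (by linarith)
    calc (0 : ENNReal) < volume (Set.Ioi T) := by simp [Real.volume_Ioi]
      _ ≤ _ := measure_mono hsub
  have hIa := posI a ha ha0
  have hIb := posI b hb1 hb
  -- the scaling factor lam
  have hx : 0 < (∫ t in Set.Ioi (0 : ℝ), t ^ (b - 1) * (ω 0 - ω (φ t))) /
      ∫ t in Set.Ioi (0 : ℝ), t ^ (b - 1) * (ω 0 - ω t) := div_pos hIb hJb.2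
  set lam := ((∫ t in Set.Ioi (0 : ℝ), t ^ (b - 1) * (ω 0 - ω (φ t))) /
      ∫ t in Set.Ioi (0 : ℝ), t ^ (b - 1) * (ω 0 - ω t)) ^ (-(1 / b)) with hlamdef
  have hlam : 0 < lam := Real.rpow_pos_of_pos hx _
  have hlamb : lam ^ (-b) = (∫ t in Set.Ioi (0 : ℝ), t ^ (b - 1) * (ω 0 - ω (φ t))) /
      ∫ t in Set.Ioi (0 : ℝ), t ^ (b - 1) * (ω 0 - ω t) := by
    rw [hlamdef, ← Real.rpow_mul hx.le,
      show -(1 / b) * (-b) = 1 by field_simp, Real.rpow_one]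
  have hGb := mp_scale ω hlam hJb.1
  have hGa := mp_scale ω hlam hJa.1
  have hGb_val : (∫ t in Set.Ioi (0 : ℝ), t ^ (b - 1) * (ω 0 - ω (lam * t)))
      = ∫ t in Set.Ioi (0 : ℝ), t ^ (b - 1) * (ω 0 - ω (φ t)) := by
    rw [hGb.2, hlamb, div_mul_cancel₀ _ (ne_of_gt hJb.2)]
  have hZero : (∫ t in Set.Ioi (0 : ℝ),
      (t ^ (b - 1) * (ω 0 - ω (φ t)) - t ^ (b - 1) * (ω 0 - ω (lam * t)))) = 0 := by
    rw [integral_sub (intI b hb1 hb) hGb.1, hGb_val, sub_self]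
  -- the set where φ is below the line
  set S := {t : ℝ | 0 < t ∧ φ t < lam * t} with hSdef
  have hinit : ∀ t u : ℝ, 0 < t → t ≤ u → u ∈ S → t ∈ S := by
    intro t u htp htu hu
    refine ⟨htp, ?_⟩
    have h1 : φ t / t ≤ φ u / u :=
      hφ_div_mono (mem_Ioi.mpr htp) (mem_Ioi.mpr hu.1) htu
    have h2 : φ u / u < lam := by rw [div_lt_iff₀ hu.1]; exact hu.2
    have h3 : φ t / t < lam := lt_of_le_of_lt h1 h2
    rw [div_lt_iff₀ htp] at h3
    exact h3
  -- the key inequality at exponent a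
  have hKey : (∫ t in Set.Ioi (0 : ℝ),
      (t ^ (a - 1) * (ω 0 - ω (φ t)) - t ^ (a - 1) * (ω 0 - ω (lam * t)))) ≤ 0 := by
    by_cases hS : S.Nonempty
    · by_cases hBdd : BddAbove S
      · -- main case : sSup S is the crossing point
        obtain ⟨t1, ht1⟩ := hS
        set ts := sSup S with hts
        have htspos : 0 < ts := lt_of_lt_of_le ht1.1 (le_csSup hBdd ht1)
        have hpt : ∀ t ∈ Set.Ioi (0 : ℝ),
            t ^ (a - 1) * (ω 0 - ω (φ t)) - t ^ (a - 1) * (ω 0 - ω (lam * t))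
            ≤ ts ^ (a - b) *
              (t ^ (b - 1) * (ω 0 - ω (φ t)) - t ^ (b - 1) * (ω 0 - ω (lam * t))) := by
          intro t ht
          have htp : (0 : ℝ) < t := ht
          have hsplit : t ^ (a - 1) = t ^ (a - b) * t ^ (b - 1) := by
            rw [← Real.rpow_add htp]; congr 1; ring
          have hD : t ^ (a - 1) * (ω 0 - ω (φ t)) - t ^ (a - 1) * (ω 0 - ω (lam * t))
              = t ^ (a - b) *
                (t ^ (b - 1) * (ω 0 - ω (φ t)) - t ^ (b - 1) * (ω 0 - ω (lam * t))) := by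
            rw [hsplit]; ring
          rw [hD]
          by_cases htS : t ∈ S
          · have hle : t ≤ ts := le_csSup hBdd htS
            have hω2 : ω (lam * t) ≤ ω (φ t) :=
              hωle (φ t) (lam * t) (hφpos t ht) (le_of_lt htS.2)
            have hD0 : t ^ (b - 1) * (ω 0 - ω (φ t)) -
                t ^ (b - 1) * (ω 0 - ω (lam * t)) ≤ 0 := by
              nlinarith [Real.rpow_nonneg htp.le (b - 1)]
            have hcoef : ts ^ (a - b) ≤ t ^ (a - b) :=
              Real.rpow_le_rpow_of_nonpos htp hle (by linarith)
            exact mul_le_mul_of_nonpos_right hcoef hD0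
          · have hge : ts ≤ t := csSup_le ⟨t1, ht1⟩ fun u huS => by
              by_contra hgt
              push_neg at hgt
              exact htS (hinit t u htp (le_of_lt hgt) huS)
            have hlam_le : lam * t ≤ φ t := by
              by_contra hlt
              push_neg at hlt
              exact htS ⟨htp, hlt⟩
            have hω2 : ω (φ t) ≤ ω (lam * t) :=
              hωle (lam * t) (φ t) (by positivity) hlam_le
            have hD0 : 0 ≤ t ^ (b - 1) * (ω 0 - ω (φ t)) -
                t ^ (b - 1) * (ω 0 - ω (lam * t)) := by
              nlinarith [Real.rpow_nonneg htp.le (b - 1)]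
            have hcoef : t ^ (a - b) ≤ ts ^ (a - b) :=
              Real.rpow_le_rpow_of_nonpos htspos hge (by linarith)
            exact mul_le_mul_of_nonneg_right hcoef hD0
        have hint1 : IntegrableOn (fun t =>
            t ^ (a - 1) * (ω 0 - ω (φ t)) - t ^ (a - 1) * (ω 0 - ω (lam * t)))
            (Set.Ioi 0) := (intI a ha ha0).sub hGa.1
        have hint2 : IntegrableOn (fun t => ts ^ (a - b) *
            (t ^ (b - 1) * (ω 0 - ω (φ t)) - t ^ (b - 1) * (ω 0 - ω (lam * t))))
            (Set.Ioi 0) := ((intI b hb1 hb).sub hGb.1).const_mul _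
        calc (∫ t in Set.Ioi (0 : ℝ),
            (t ^ (a - 1) * (ω 0 - ω (φ t)) - t ^ (a - 1) * (ω 0 - ω (lam * t))))
            ≤ ∫ t in Set.Ioi (0 : ℝ), ts ^ (a - b) *
              (t ^ (b - 1) * (ω 0 - ω (φ t)) - t ^ (b - 1) * (ω 0 - ω (lam * t))) :=
            setIntegral_mono_on hint1 hint2 measurableSet_Ioi hpt
          _ = ts ^ (a - b) * ∫ t in Set.Ioi (0 : ℝ),
              (t ^ (b - 1) * (ω 0 - ω (φ t)) - t ^ (b - 1) * (ω 0 - ω (lam * t))) :=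
            integral_const_mul _ _
          _ = 0 := by rw [hZero, mul_zero]
      · -- S unbounded : φ is below the line everywhere
        apply setIntegral_nonpos measurableSet_Ioi
        intro t ht
        have htp : (0 : ℝ) < t := ht
        have htS : t ∈ S := by
          obtain ⟨u, huS, htu⟩ : ∃ u ∈ S, t ≤ u := by
            by_contra hcon
            push_neg at hcon
            exact hBdd ⟨t, fun u huS => (hcon u huS).le⟩
          exact hinit t u htp htu huS
        have hω2 : ω (lam * t) ≤ ω (φ t) :=
          hωle (φ t) (lam * t) (hφpos t ht) (le_of_lt htS.2)
        nlinarith [Real.rpow_nonneg htp.le (a - 1)]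
    · -- S empty : φ is above the line everywhere, integrand vanishes a.e.
      rw [Set.not_nonempty_iff_eq_empty] at hS
      have hab' : ∀ t : ℝ, 0 < t → lam * t ≤ φ t := by
        intro t htp
        by_contra hlt
        push_neg at hlt
        have : t ∈ S := ⟨htp, hlt⟩
        rw [hS] at this
        exact this
      have hnn : 0 ≤ᵐ[volume.restrict (Set.Ioi 0)]
          fun t => t ^ (b - 1) * (ω 0 - ω (φ t)) - t ^ (b - 1) * (ω 0 - ω (lam * t)) := by
        refine (ae_restrict_iff' measurableSet_Ioi).mpr (ae_of_all _ fun t ht => ?_)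
        have htp : (0 : ℝ) < t := ht
        have hω2 : ω (φ t) ≤ ω (lam * t) :=
          hωle (lam * t) (φ t) (by positivity) (hab' t htp)
        show (0 : ℝ) ≤ t ^ (b - 1) * (ω 0 - ω (φ t)) - t ^ (b - 1) * (ω 0 - ω (lam * t))
        nlinarith [Real.rpow_nonneg htp.le (b - 1)]
      have haez := (integral_eq_zero_iff_of_nonneg_ae hnn
        ((intI b hb1 hb).sub hGb.1)).mp hZero
      have haez' : (fun t =>
          t ^ (a - 1) * (ω 0 - ω (φ t)) - t ^ (a - 1) * (ω 0 - ω (lam * t)))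
          =ᵐ[volume.restrict (Set.Ioi 0)] 0 := by
        filter_upwards [haez, self_mem_ae_restrict measurableSet_Ioi] with t h1 h2
        have htp : (0 : ℝ) < t := h2
        have hsplit : t ^ (a - 1) = t ^ (a - b) * t ^ (b - 1) := by
          rw [← Real.rpow_add htp]; congr 1; ring
        have h1' : t ^ (b - 1) * (ω 0 - ω (φ t)) -
            t ^ (b - 1) * (ω 0 - ω (lam * t)) = 0 := h1
        show t ^ (a - 1) * (ω 0 - ω (φ t)) - t ^ (a - 1) * (ω 0 - ω (lam * t)) = 0
        calc t ^ (a - 1) * (ω 0 - ω (φ t)) - t ^ (a - 1) * (ω 0 - ω (lam * t))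
            = t ^ (a - b) *
              (t ^ (b - 1) * (ω 0 - ω (φ t)) - t ^ (b - 1) * (ω 0 - ω (lam * t))) := by
              rw [hsplit]; ring
          _ = 0 := by rw [h1', mul_zero]
      rw [integral_congr_ae haez']
      simp
  -- deduce the ratio bound at exponent a
  have hIa_le : (∫ t in Set.Ioi (0 : ℝ), t ^ (a - 1) * (ω 0 - ω (φ t)))
      ≤ lam ^ (-a) * ∫ t in Set.Ioi (0 : ℝ), t ^ (a - 1) * (ω 0 - ω t) := by
    have h := hKey
    rw [integral_sub (intI a ha ha0) hGa.1, hGa.2] at h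
    linarith
  have hratio : (∫ t in Set.Ioi (0 : ℝ), t ^ (a - 1) * (ω 0 - ω (φ t))) /
      (∫ t in Set.Ioi (0 : ℝ), t ^ (a - 1) * (ω 0 - ω t)) ≤ lam ^ (-a) :=
    (div_le_iff₀ hJa.2).mpr hIa_le
  -- conclude
  unfold zetaMPneg
  have hZb : ((∫ t in Set.Ioi (0 : ℝ), t ^ (b - 1) * (ω 0 - ω (φ t))) /
      ∫ t in Set.Ioi (0 : ℝ), t ^ (b - 1) * (ω 0 - ω t)) ^ (1 / b) = lam⁻¹ := by
    rw [hlamdef, Real.rpow_neg hx.le, inv_inv]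
  rw [hZb]
  have h2 : (lam ^ (-a)) ^ ((1 : ℝ) / a) = lam⁻¹ := by
    rw [← Real.rpow_mul hlam.le, show -a * ((1 : ℝ) / a) = -1 by field_simp,
      Real.rpow_neg_one]
  calc lam⁻¹ = (lam ^ (-a)) ^ ((1 : ℝ) / a) := h2.symm
    _ ≤ ((∫ t in Set.Ioi (0 : ℝ), t ^ (a - 1) * (ω 0 - ω (φ t))) /
        ∫ t in Set.Ioi (0 : ℝ), t ^ (a - 1) * (ω 0 - ω t)) ^ (1 / a) :=
      Real.rpow_le_rpow_of_nonpos (div_pos hIa hJa.2) hratio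
        (le_of_lt (by rw [one_div]; exact inv_neg''.mpr ha0))
end

section
/- Let ω:[0,∞)→[0,∞) be decreasing with 0 < ∫_0^∞ t^{γ−1}ω(t)dt < ∞ for every γ > 0 and 0 < ∫_0^∞ t^{γ−1}(ω(0)−ω(t))dt < ∞ for every γ ∈ (−1,0), and let φ:[0,∞)→[0,∞) be not identically zero with φ(0)=0, such that t ↦ φ(t) and t ↦ φ(t)/t are increasing on (0,∞). Then for all −1 < α < 0 < β, ( ∫_0^∞ t^{β−1}ω(φ(t))dt / ∫_0^∞ t^{β−1}ω(t)dt )^{1/β} ≤ ( ∫_0^∞ t^{α−1}(ω(0)−ω(φ(t)))dt / ∫_0^∞ t^{α−1}(ω(0)−ω(t))dt )^{1/α}. -/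
open MeasureTheory Set

private lemma mp_scale_eqOn (f : ℝ → ℝ) {l c : ℝ} (hl : 0 < l) :
    Set.EqOn (fun t : ℝ => t ^ (c - 1) * f (l * t))
      (fun t : ℝ => l ^ (-(c - 1)) * ((l * t) ^ (c - 1) * f (l * t))) (Set.Ioi 0) := by
  intro t ht
  have ht0 : (0:ℝ) < t := ht
  have h1 : (l * t) ^ (c - 1) = l ^ (c - 1) * t ^ (c - 1) := Real.mul_rpow hl.le ht0.le
  have h2 : l ^ (-(c - 1)) * l ^ (c - 1) = 1 := by
    rw [← Real.rpow_add hl]; simp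
  simp only
  rw [h1]
  linear_combination (-(t ^ (c - 1) * f (l * t))) * h2

private lemma mp_scale_integrable (f : ℝ → ℝ) {l c : ℝ} (hl : 0 < l)
    (hf : IntegrableOn (fun t => t ^ (c - 1) * f t) (Set.Ioi 0)) :
    IntegrableOn (fun t => t ^ (c - 1) * f (l * t)) (Set.Ioi 0) := by
  have h1 : IntegrableOn (fun t : ℝ => (l * t) ^ (c - 1) * f (l * t)) (Set.Ioi 0) := by
    have h := (integrableOn_Ioi_comp_mul_left_iff (fun s : ℝ => s ^ (c - 1) * f s) 0 hl).2
    simp only [mul_zero] at h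
    exact h hf
  have h2 : IntegrableOn
      (fun t : ℝ => l ^ (-(c - 1)) * ((l * t) ^ (c - 1) * f (l * t))) (Set.Ioi 0) :=
    h1.const_mul _
  exact h2.congr_fun (mp_scale_eqOn f hl).symm measurableSet_Ioi

private lemma mp_scale_integral (f : ℝ → ℝ) {l c : ℝ} (hl : 0 < l) :
    ∫ t in Set.Ioi (0:ℝ), t ^ (c - 1) * f (l * t)
      = l ^ (-c) * ∫ t in Set.Ioi (0:ℝ), t ^ (c - 1) * f t := by
  rw [setIntegral_congr_fun measurableSet_Ioi (mp_scale_eqOn f hl)]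
  rw [integral_const_mul]
  have h := integral_comp_mul_left_Ioi (fun s : ℝ => s ^ (c - 1) * f s) 0 hl
  simp only [mul_zero, smul_eq_mul] at h
  rw [h, ← mul_assoc]
  congr 1
  rw [← Real.rpow_neg_one l, ← Real.rpow_add hl]
  ring_nf

set_option maxHeartbeats 1000000 in
theorem milman_pajor_across_zero (ω φ : ℝ → ℝ)
    (hω_nonneg : ∀ t, 0 ≤ t → 0 ≤ ω t)
    (hω_dec : AntitoneOn ω (Set.Ici 0))
    (hω_int_pos : ∀ c : ℝ, 0 < c → IntegrableOn (fun t => t ^ (c - 1) * ω t) (Set.Ioi 0) ∧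
      0 < ∫ t in Set.Ioi (0 : ℝ), t ^ (c - 1) * ω t)
    (hω_int_neg : ∀ c : ℝ, -1 < c → c < 0 →
      IntegrableOn (fun t => t ^ (c - 1) * (ω 0 - ω t)) (Set.Ioi 0) ∧
      0 < ∫ t in Set.Ioi (0 : ℝ), t ^ (c - 1) * (ω 0 - ω t))
    (hφ_nonneg : ∀ t, 0 ≤ t → 0 ≤ φ t) (hφ_zero : φ 0 = 0)
    (hφ_nonzero : ∃ t, 0 ≤ t ∧ φ t ≠ 0)
    (hφ_mono : MonotoneOn φ (Set.Ioi 0))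
    (hφ_div_mono : MonotoneOn (fun t => φ t / t) (Set.Ioi 0)) :
    ∀ a b : ℝ, -1 < a → a < 0 → 0 < b →
      ((∫ t in Set.Ioi (0 : ℝ), t ^ (b - 1) * ω (φ t)) /
        (∫ t in Set.Ioi (0 : ℝ), t ^ (b - 1) * ω t)) ^ (1 / b) ≤
      ((∫ t in Set.Ioi (0 : ℝ), t ^ (a - 1) * (ω 0 - ω (φ t))) /
        (∫ t in Set.Ioi (0 : ℝ), t ^ (a - 1) * (ω 0 - ω t))) ^ (1 / a) := by
  intro a b ha ha0 hb
  obtain ⟨hIb_int, hIb_pos⟩ := hω_int_pos b hb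
  obtain ⟨hIa_int, hIa_pos⟩ := hω_int_neg a ha ha0
  have hω0 : ∀ t, 0 ≤ t → ω t ≤ ω 0 := fun t ht =>
    hω_dec (Set.mem_Ici.2 le_rfl) (Set.mem_Ici.2 ht) ht
  -- the point t1 where φ is positive
  obtain ⟨t1, ht1_nonneg, ht1_ne⟩ := hφ_nonzero
  have ht1_pos : 0 < t1 := by
    rcases ht1_nonneg.lt_or_eq with h | h
    · exact h
    · exact absurd (h ▸ hφ_zero) ht1_ne
  have hφt1_pos : 0 < φ t1 := (hφ_nonneg t1 ht1_nonneg).lt_of_ne (Ne.symm ht1_ne)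
  set c₀ := φ t1 / t1 with hc₀_def
  have hc₀_pos : 0 < c₀ := div_pos hφt1_pos ht1_pos
  have hφ_le : ∀ t, 0 < t → t ≤ t1 → φ t ≤ c₀ * t := by
    intro t ht htt1
    have h := hφ_div_mono (Set.mem_Ioi.2 ht) (Set.mem_Ioi.2 ht1_pos) htt1
    calc φ t = (φ t / t) * t := by field_simp
    _ ≤ c₀ * t := mul_le_mul_of_nonneg_right h ht.le
  have hφ_ge : ∀ t, t1 ≤ t → c₀ * t ≤ φ t := by
    intro t ht
    have htpos : 0 < t := lt_of_lt_of_le ht1_pos ht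
    have h := hφ_div_mono (Set.mem_Ioi.2 ht1_pos) (Set.mem_Ioi.2 htpos) ht
    calc c₀ * t ≤ (φ t / t) * t := mul_le_mul_of_nonneg_right h htpos.le
    _ = φ t := by field_simp
  -- transfer of the division bound
  have hdiv_le : ∀ l s t : ℝ, 0 < s → s ≤ t → φ t ≤ l * t → φ s ≤ l * s := by
    intro l s t hs hst h
    have htpos : 0 < t := lt_of_lt_of_le hs hst
    have h1 : φ s / s ≤ φ t / t := hφ_div_mono (Set.mem_Ioi.2 hs) (Set.mem_Ioi.2 htpos) hst
    have h2 : φ t / t ≤ l := (div_le_iff₀ htpos).2 (by linarith [mul_comm l t])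
    calc φ s = (φ s / s) * s := by field_simp
    _ ≤ l * s := mul_le_mul_of_nonneg_right (le_trans h1 h2) hs.le
  -- measurability
  have hωm : Measurable fun t : ℝ => ω (max t 0) := by
    apply Antitone.measurable
    intro s t hst
    exact hω_dec (le_max_right s 0) (le_max_right t 0) (max_le_max hst le_rfl)
  have hφm : Measurable fun t : ℝ => φ (max t 0) := by
    apply Monotone.measurable
    intro s t hst
    rcases (le_max_right s 0).lt_or_eq with h | h
    · exact hφ_mono (Set.mem_Ioi.2 h)
        (Set.mem_Ioi.2 (lt_of_lt_of_le h (max_le_max hst le_rfl))) (max_le_max hst le_rfl)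
    · show φ (max s 0) ≤ φ (max t 0)
      have h0 : φ (max s 0) = 0 := by rw [← h, hφ_zero]
      rw [h0]
      exact hφ_nonneg _ (le_max_right t 0)
  have hmeas1 : ∀ x : ℝ, AEStronglyMeasurable (fun t => t ^ x * ω (φ t))
      (volume.restrict (Set.Ioi (0:ℝ))) := by
    intro x
    have hm : Measurable fun t : ℝ => t ^ x * ω (max (φ (max t 0)) 0) :=
      (measurable_id.pow_const x).mul (hωm.comp hφm)
    apply hm.aestronglyMeasurable.congr
    filter_upwards [ae_restrict_mem measurableSet_Ioi] with t ht
    rw [max_eq_left (le_of_lt (show (0:ℝ) < t from ht)), max_eq_left (hφ_nonneg t (le_of_lt ht))]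
  have hmeas2 : ∀ x : ℝ, AEStronglyMeasurable (fun t => t ^ x * (ω 0 - ω (φ t)))
      (volume.restrict (Set.Ioi (0:ℝ))) := by
    intro x
    have hm : Measurable fun t : ℝ => t ^ x * (ω 0 - ω (max (φ (max t 0)) 0)) :=
      (measurable_id.pow_const x).mul (measurable_const.sub (hωm.comp hφm))
    apply hm.aestronglyMeasurable.congr
    filter_upwards [ae_restrict_mem measurableSet_Ioi] with t ht
    rw [max_eq_left (le_of_lt (show (0:ℝ) < t from ht)), max_eq_left (hφ_nonneg t (le_of_lt ht))]
  -- integrability of the composed integrands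
  have hωc_int : IntegrableOn (fun t => t ^ (b - 1) * ω (c₀ * t)) (Set.Ioi 0) :=
    mp_scale_integrable ω hc₀_pos hIb_int
  have hGc_int : IntegrableOn (fun t => t ^ (a - 1) * (ω 0 - ω (c₀ * t))) (Set.Ioi 0) :=
    mp_scale_integrable (fun s => ω 0 - ω s) hc₀_pos hIa_int
  have hFb_int : IntegrableOn (fun t => t ^ (b - 1) * ω (φ t)) (Set.Ioi 0) := by
    rw [← Set.Ioc_union_Ioi_eq_Ioi ht1_pos.le]
    apply IntegrableOn.union
    · have hmaj : IntegrableOn (fun t : ℝ => t ^ (b - 1) * ω 0) (Set.Ioc 0 t1) := by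
        apply Integrable.mul_const
        rw [← IntegrableOn, ← intervalIntegrable_iff_integrableOn_Ioc_of_le ht1_pos.le]
        exact intervalIntegral.intervalIntegrable_rpow' (by linarith)
      apply Integrable.mono' hmaj
      · exact (hmeas1 (b - 1)).mono_measure
          (Measure.restrict_mono Set.Ioc_subset_Ioi_self le_rfl)
      · filter_upwards [ae_restrict_mem measurableSet_Ioc] with t ht
        have h1 : 0 ≤ t ^ (b - 1) := Real.rpow_nonneg ht.1.le _
        have h2 : 0 ≤ ω (φ t) := hω_nonneg _ (hφ_nonneg t ht.1.le)
        rw [Real.norm_eq_abs, abs_of_nonneg (mul_nonneg h1 h2)]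
        exact mul_le_mul_of_nonneg_left (hω0 _ (hφ_nonneg t ht.1.le)) h1
    · apply Integrable.mono' (hωc_int.mono_set (Set.Ioi_subset_Ioi ht1_pos.le))
      · exact (hmeas1 (b - 1)).mono_measure
          (Measure.restrict_mono (Set.Ioi_subset_Ioi ht1_pos.le) le_rfl)
      · filter_upwards [ae_restrict_mem measurableSet_Ioi] with t ht
        have htpos : 0 < t := lt_trans ht1_pos ht
        have h1 : 0 ≤ t ^ (b - 1) := Real.rpow_nonneg htpos.le _
        have h2 : 0 ≤ ω (φ t) := hω_nonneg _ (hφ_nonneg t htpos.le)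
        rw [Real.norm_eq_abs, abs_of_nonneg (mul_nonneg h1 h2)]
        refine mul_le_mul_of_nonneg_left ?_ h1
        exact hω_dec (Set.mem_Ici.2 (mul_nonneg hc₀_pos.le htpos.le))
          (Set.mem_Ici.2 (hφ_nonneg t htpos.le)) (hφ_ge t (le_of_lt ht))
  have hGa_int : IntegrableOn (fun t => t ^ (a - 1) * (ω 0 - ω (φ t))) (Set.Ioi 0) := by
    rw [← Set.Ioc_union_Ioi_eq_Ioi ht1_pos.le]
    apply IntegrableOn.union
    · apply Integrable.mono' (hGc_int.mono_set Set.Ioc_subset_Ioi_self)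
      · exact (hmeas2 (a - 1)).mono_measure
          (Measure.restrict_mono Set.Ioc_subset_Ioi_self le_rfl)
      · filter_upwards [ae_restrict_mem measurableSet_Ioc] with t ht
        have h1 : 0 ≤ t ^ (a - 1) := Real.rpow_nonneg ht.1.le _
        have h2 : 0 ≤ ω 0 - ω (φ t) := sub_nonneg.2 (hω0 _ (hφ_nonneg t ht.1.le))
        rw [Real.norm_eq_abs, abs_of_nonneg (mul_nonneg h1 h2)]
        refine mul_le_mul_of_nonneg_left ?_ h1
        have h3 : ω (c₀ * t) ≤ ω (φ t) :=
          hω_dec (Set.mem_Ici.2 (hφ_nonneg t ht.1.le))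
            (Set.mem_Ici.2 (mul_nonneg hc₀_pos.le ht.1.le)) (hφ_le t ht.1 ht.2)
        linarith
    · have hmaj : IntegrableOn (fun t : ℝ => t ^ (a - 1) * ω 0) (Set.Ioi t1) :=
        (integrableOn_Ioi_rpow_of_lt (by linarith) ht1_pos).mul_const (ω 0)
      apply Integrable.mono' hmaj
      · exact (hmeas2 (a - 1)).mono_measure
          (Measure.restrict_mono (Set.Ioi_subset_Ioi ht1_pos.le) le_rfl)
      · filter_upwards [ae_restrict_mem measurableSet_Ioi] with t ht
        have htpos : 0 < t := lt_trans ht1_pos ht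
        have h1 : 0 ≤ t ^ (a - 1) := Real.rpow_nonneg htpos.le _
        have h2 : 0 ≤ ω 0 - ω (φ t) := sub_nonneg.2 (hω0 _ (hφ_nonneg t htpos.le))
        rw [Real.norm_eq_abs, abs_of_nonneg (mul_nonneg h1 h2)]
        refine mul_le_mul_of_nonneg_left ?_ h1
        have h3 : 0 ≤ ω (φ t) := hω_nonneg _ (hφ_nonneg t htpos.le)
        linarith
  -- nonnegativity of the b-numerator
  have hIφb_nonneg : 0 ≤ ∫ t in Set.Ioi (0:ℝ), t ^ (b - 1) * ω (φ t) :=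
    setIntegral_nonneg measurableSet_Ioi fun t ht =>
      mul_nonneg (Real.rpow_nonneg (le_of_lt ht) _) (hω_nonneg _ (hφ_nonneg t (le_of_lt ht)))
  -- positivity of the a-numerator
  obtain ⟨s0, hs0_pos, hs0_lt⟩ : ∃ s, 0 < s ∧ ω s < ω 0 := by
    by_contra hcon
    push_neg at hcon
    have heq : Set.EqOn (fun t : ℝ => t ^ (a - 1) * (ω 0 - ω t)) (fun _ => (0:ℝ))
        (Set.Ioi 0) := by
      intro t ht
      have h1 : ω t = ω 0 := le_antisymm (hω0 t (le_of_lt ht)) (hcon t ht)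
      simp only
      rw [h1]; ring
    rw [setIntegral_congr_fun measurableSet_Ioi heq] at hIa_pos
    simp at hIa_pos
  set T := max t1 (s0 / c₀) with hT_def
  have hT_pos : 0 < T := lt_of_lt_of_le ht1_pos (le_max_left _ _)
  have hφT : ∀ t, T < t → ω (φ t) ≤ ω s0 := by
    intro t ht
    have htpos : 0 < t := lt_trans hT_pos ht
    have h1 : s0 / c₀ ≤ t := le_of_lt (lt_of_le_of_lt (le_max_right _ _) ht)
    have h2 : s0 ≤ c₀ * t := by
      have := (div_le_iff₀ hc₀_pos).1 h1
      linarith [mul_comm t c₀]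
    have h3 : c₀ * t ≤ φ t := hφ_ge t (le_of_lt (lt_of_le_of_lt (le_max_left _ _) ht))
    exact hω_dec (Set.mem_Ici.2 hs0_pos.le) (Set.mem_Ici.2 (hφ_nonneg t htpos.le))
      (le_trans h2 h3)
  have hIφa_pos : 0 < ∫ t in Set.Ioi (0:ℝ), t ^ (a - 1) * (ω 0 - ω (φ t)) := by
    have hsplit : Set.Ioc (0:ℝ) T ∪ Set.Ioi T = Set.Ioi 0 :=
      Set.Ioc_union_Ioi_eq_Ioi hT_pos.le
    have hsub1 : Set.Ioc (0:ℝ) T ⊆ Set.Ioi 0 := Set.Ioc_subset_Ioi_self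
    have hsub2 : Set.Ioi T ⊆ Set.Ioi (0:ℝ) := Set.Ioi_subset_Ioi hT_pos.le
    have hdisj : Disjoint (Set.Ioc (0:ℝ) T) (Set.Ioi T) := Set.Ioc_disjoint_Ioi le_rfl
    have hsum := setIntegral_union (f := fun t : ℝ => t ^ (a - 1) * (ω 0 - ω (φ t)))
      (μ := volume) hdisj measurableSet_Ioi (hGa_int.mono_set hsub1) (hGa_int.mono_set hsub2)
    rw [hsplit] at hsum
    set K := ω 0 - ω s0 with hK_def
    have hK_pos : 0 < K := sub_pos.2 hs0_lt
    have h_low_int : IntegrableOn (fun t : ℝ => t ^ (a - 1) * K) (Set.Ioi T) :=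
      (integrableOn_Ioi_rpow_of_lt (by linarith) hT_pos).mul_const K
    have h_tail : (∫ t in Set.Ioi T, t ^ (a - 1) * K) ≤
        ∫ t in Set.Ioi T, t ^ (a - 1) * (ω 0 - ω (φ t)) := by
      apply setIntegral_mono_on h_low_int (hGa_int.mono_set hsub2) measurableSet_Ioi
      intro t ht
      refine mul_le_mul_of_nonneg_left ?_ (Real.rpow_nonneg (lt_trans hT_pos ht).le _)
      have := hφT t ht
      rw [hK_def]; linarith
    have h_tail_pos : 0 < ∫ t in Set.Ioi T, t ^ (a - 1) * K := by
      rw [integral_mul_const, integral_Ioi_rpow_of_lt (by linarith) hT_pos]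
      apply mul_pos _ hK_pos
      have h1 : (0:ℝ) < T ^ (a - 1 + 1) := Real.rpow_pos_of_pos hT_pos _
      rw [div_pos_iff]
      right
      constructor <;> [linarith; linarith]
    have h_front_nonneg : 0 ≤ ∫ t in Set.Ioc (0:ℝ) T, t ^ (a - 1) * (ω 0 - ω (φ t)) :=
      setIntegral_nonneg measurableSet_Ioc fun t ht =>
        mul_nonneg (Real.rpow_nonneg ht.1.le _) (sub_nonneg.2 (hω0 _ (hφ_nonneg t ht.1.le)))
    rw [hsum]
    linarith
  -- abbreviations
  set A := ∫ t in Set.Ioi (0:ℝ), t ^ (a - 1) * (ω 0 - ω t) with hA_def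
  set Aφ := ∫ t in Set.Ioi (0:ℝ), t ^ (a - 1) * (ω 0 - ω (φ t)) with hAφ_def
  set B := ∫ t in Set.Ioi (0:ℝ), t ^ (b - 1) * ω t with hB_def
  set Bφ := ∫ t in Set.Ioi (0:ℝ), t ^ (b - 1) * ω (φ t) with hBφ_def
  set r := Aφ / A with hr_def
  have hr_pos : 0 < r := div_pos hIφa_pos hIa_pos
  set l := r ^ (-(1/a)) with hl_def
  have hl_pos : 0 < l := Real.rpow_pos_of_pos hr_pos _
  have hl_neg_a : l ^ (-a) = r := by
    rw [hl_def, ← Real.rpow_mul hr_pos.le]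
    have h1 : -(1/a) * -a = 1 := by
      rw [neg_mul_neg, one_div, inv_mul_cancel₀ ha0.ne]
    rw [h1, Real.rpow_one]
  -- scaled integrals
  have hsa_int : IntegrableOn (fun t => t ^ (a - 1) * (ω 0 - ω (l * t))) (Set.Ioi 0) :=
    mp_scale_integrable (fun s => ω 0 - ω s) hl_pos hIa_int
  have hsa : (∫ t in Set.Ioi (0:ℝ), t ^ (a - 1) * (ω 0 - ω (l * t))) = l ^ (-a) * A :=
    mp_scale_integral (fun s => ω 0 - ω s) hl_pos
  have hsb_int : IntegrableOn (fun t => t ^ (b - 1) * ω (l * t)) (Set.Ioi 0) :=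
    mp_scale_integrable ω hl_pos hIb_int
  have hsb : (∫ t in Set.Ioi (0:ℝ), t ^ (b - 1) * ω (l * t)) = l ^ (-b) * B :=
    mp_scale_integral ω hl_pos
  -- the balanced difference g
  set g := fun t : ℝ => t ^ (a - 1) * (ω 0 - ω (l * t)) - t ^ (a - 1) * (ω 0 - ω (φ t))
    with hg_def
  have hg_int : IntegrableOn g (Set.Ioi 0) := hsa_int.sub hGa_int
  have hg_zero : ∫ t in Set.Ioi (0:ℝ), g t = 0 := by
    rw [hg_def]
    rw [integral_sub hsa_int hGa_int, hsa, hl_neg_a, ← hAφ_def, hr_def,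
      div_mul_cancel₀ _ (ne_of_gt hIa_pos)]
    ring
  have hg_sign_pos : ∀ t, 0 < t → φ t ≤ l * t → 0 ≤ g t := by
    intro t ht hle
    have h1 : ω (l * t) ≤ ω (φ t) :=
      hω_dec (Set.mem_Ici.2 (hφ_nonneg t ht.le))
        (Set.mem_Ici.2 (mul_nonneg hl_pos.le ht.le)) hle
    have h2 : 0 ≤ t ^ (a - 1) := Real.rpow_nonneg ht.le _
    rw [hg_def]
    simp only
    nlinarith
  have hg_sign_neg : ∀ t, 0 < t → l * t ≤ φ t → g t ≤ 0 := by
    intro t ht hle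
    have h1 : ω (φ t) ≤ ω (l * t) :=
      hω_dec (Set.mem_Ici.2 (mul_nonneg hl_pos.le ht.le))
        (Set.mem_Ici.2 (hφ_nonneg t ht.le)) hle
    have h2 : 0 ≤ t ^ (a - 1) := Real.rpow_nonneg ht.le _
    rw [hg_def]
    simp only
    nlinarith
  have hGg : ∀ t ∈ Set.Ioi (0:ℝ), t ^ (b - 1) * ω (φ t) - t ^ (b - 1) * ω (l * t)
      = t ^ (b - a) * g t := by
    intro t ht
    have h12 : t ^ (b - a) * t ^ (a - 1) = t ^ (b - 1) := by
      rw [← Real.rpow_add ht]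
      ring_nf
    rw [hg_def]
    simp only
    linear_combination (ω (l * t) - ω (φ t)) * h12
  -- the key inequality
  have hKey : (∫ t in Set.Ioi (0:ℝ),
      (t ^ (b - 1) * ω (φ t) - t ^ (b - 1) * ω (l * t))) ≤ 0 := by
    by_cases hall : ∀ t, 0 < t → φ t ≤ l * t
    · have hnn : 0 ≤ᵐ[volume.restrict (Set.Ioi (0:ℝ))] g := by
        filter_upwards [ae_restrict_mem measurableSet_Ioi] with t ht
        exact hg_sign_pos t ht (hall t ht)
      have hzero : g =ᵐ[volume.restrict (Set.Ioi (0:ℝ))] 0 :=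
        (integral_eq_zero_iff_of_nonneg_ae hnn hg_int).1 hg_zero
      have hG0 : (fun t => t ^ (b - 1) * ω (φ t) - t ^ (b - 1) * ω (l * t))
          =ᵐ[volume.restrict (Set.Ioi (0:ℝ))] 0 := by
        filter_upwards [hzero, ae_restrict_mem measurableSet_Ioi] with t h0 ht
        rw [hGg t ht]
        simp only [Pi.zero_apply] at h0 ⊢
        rw [h0, mul_zero]
      rw [integral_congr_ae hG0]
      simp
    · push_neg at hall
      obtain ⟨v, hv_pos, hv⟩ := hall
      by_cases hex : ∃ u, 0 < u ∧ φ u ≤ l * u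
      · obtain ⟨u, hu_pos, hu⟩ := hex
        set S := {t : ℝ | 0 < t ∧ φ t ≤ l * t} with hS_def
        have hS_ne : S.Nonempty := ⟨u, hu_pos, hu⟩
        have hS_bdd : BddAbove S := by
          refine ⟨v, fun s hs => ?_⟩
          by_contra hc
          push_neg at hc
          exact absurd (hdiv_le l v s hv_pos (le_of_lt hc) hs.2) (not_le.2 hv)
        set t0 := sSup S with ht0_def
        have ht0_pos : 0 < t0 := lt_of_lt_of_le hu_pos (le_csSup hS_bdd ⟨hu_pos, hu⟩)
        have hpt : ∀ t ∈ Set.Ioi (0:ℝ),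
            t ^ (b - 1) * ω (φ t) - t ^ (b - 1) * ω (l * t) ≤ t0 ^ (b - a) * g t := by
          intro t ht
          rw [hGg t ht]
          rcases le_or_gt (φ t) (l * t) with hle | hlt
          · have htle : t ≤ t0 := le_csSup hS_bdd ⟨ht, hle⟩
            exact mul_le_mul_of_nonneg_right
              (Real.rpow_le_rpow (le_of_lt ht) htle (by linarith)) (hg_sign_pos t ht hle)
          · have ht0le : t0 ≤ t := by
              apply csSup_le hS_ne
              intro s hs
              by_contra hc
              push_neg at hc
              exact absurd (hdiv_le l t s ht (le_of_lt hc) hs.2) (not_le.2 hlt)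
            exact mul_le_mul_of_nonpos_right
              (Real.rpow_le_rpow ht0_pos.le ht0le (by linarith))
              (hg_sign_neg t ht (le_of_lt hlt))
        calc (∫ t in Set.Ioi (0:ℝ), (t ^ (b - 1) * ω (φ t) - t ^ (b - 1) * ω (l * t)))
            ≤ ∫ t in Set.Ioi (0:ℝ), t0 ^ (b - a) * g t :=
              setIntegral_mono_on (hFb_int.sub hsb_int) (hg_int.const_mul _)
                measurableSet_Ioi hpt
          _ = t0 ^ (b - a) * ∫ t in Set.Ioi (0:ℝ), g t := integral_const_mul _ _
          _ = 0 := by rw [hg_zero, mul_zero]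
      · push_neg at hex
        apply integral_nonpos_of_ae
        filter_upwards [ae_restrict_mem measurableSet_Ioi] with t ht
        have h1 := hg_sign_neg t ht (le_of_lt (hex t ht))
        have h2 : (0:ℝ) ≤ t ^ (b - a) := Real.rpow_nonneg (le_of_lt ht) _
        have h3 := hGg t ht
        simp only [Pi.zero_apply]
        nlinarith
  -- conclude
  have hBφ_le : Bφ ≤ l ^ (-b) * B := by
    rw [integral_sub hFb_int hsb_int, hsb, ← hBφ_def] at hKey
    linarith
  have hratio : Bφ / B ≤ l ^ (-b) := (div_le_iff₀ hIb_pos).2 (by linarith [hBφ_le])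
  calc (Bφ / B) ^ (1/b) ≤ (l ^ (-b)) ^ (1/b) :=
        Real.rpow_le_rpow (div_nonneg hIφb_nonneg hIb_pos.le) hratio (by positivity)
    _ = l ^ (-1:ℝ) := by
        rw [← Real.rpow_mul hl_pos.le]
        congr 1
        field_simp
    _ = r ^ (1/a) := by
        rw [hl_def, ← Real.rpow_mul hr_pos.le]
        congr 1
        ring
end

section
/- Let n ≥ 1, s > 0, and define f:ℝⁿ→[0,∞) by f(x) = (1−(x₁+⋯+xₙ))₊^{1/s} if all coordinates of x are non-negative, and f(x) = 0 otherwise (i.e., f(x) = (1−‖x‖_{Δ_n})₊^{1/s}). Then for every y ∈ ℝⁿ with y₁+⋯+yₙ = 0, ∫_{ℝⁿ} f(x)f(x+y)dx = (B(n, 1+2/s)/(n−1)!) · (1 − (|y₁|+⋯+|yₙ|)/2)₊^{n+2/s}. -/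
open MeasureTheory Set
open scoped BigOperators

/-- The Euler Beta function `B(a,b) = Γ(a)Γ(b)/Γ(a+b)`. -/
noncomputable def euBeta (a b : ℝ) : ℝ := Real.Gamma a * Real.Gamma b / Real.Gamma (a + b)

lemma lintegral_line (q t : ℝ) (hq : 0 < q) :
    ∫⁻ u : ℝ, (if 0 ≤ u then ENNReal.ofReal (max (t - u) 0 ^ q) else 0)
      = ENNReal.ofReal (max t 0 ^ (q + 1) / (q + 1)) := by
  have hcont : Continuous fun v : ℝ => max v 0 ^ q := by
    apply continuous_iff_continuousAt.2
    intro x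
    exact (Real.continuousAt_rpow_const _ _ (Or.inr hq.le)).comp
      ((continuous_id.max continuous_const).continuousAt)
  have hmeas : Measurable fun u : ℝ => max (t - u) 0 ^ q :=
    (hcont.comp (continuous_const.sub continuous_id)).measurable
  -- rewrite as set lintegral over Ici 0
  have h1 : (∫⁻ u : ℝ, (if 0 ≤ u then ENNReal.ofReal (max (t - u) 0 ^ q) else 0))
      = ∫⁻ u in Ici (0:ℝ), ENNReal.ofReal (max (t - u) 0 ^ q) := by
    rw [← lintegral_indicator measurableSet_Ici]
    congr 1 with u
  rw [h1]
  -- integrability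
  have hInt : IntegrableOn (fun u : ℝ => max (t - u) 0 ^ q) (Ici 0) := by
    rcases le_or_gt t 0 with ht | ht
    · have : EqOn (fun u : ℝ => max (t - u) 0 ^ q) 0 (Ici 0) := by
        intro u hu
        have : t - u ≤ 0 := by simp at hu ⊢; linarith
        simp [max_eq_right this, Real.zero_rpow hq.ne']
      exact (integrableOn_zero).congr_fun this.symm measurableSet_Ici
    · have hIcc : IntegrableOn (fun u : ℝ => max (t - u) 0 ^ q) (Icc 0 t) :=
        (hcont.comp (continuous_const.sub continuous_id)).continuousOn.integrableOn_compact
          isCompact_Icc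
      have hIoi : IntegrableOn (fun u : ℝ => max (t - u) 0 ^ q) (Ioi t) := by
        have : EqOn (fun u : ℝ => max (t - u) 0 ^ q) 0 (Ioi t) := by
          intro u hu
          have : t - u ≤ 0 := by simp at hu ⊢; linarith
          simp [max_eq_right this, Real.zero_rpow hq.ne']
        exact (integrableOn_zero).congr_fun this.symm measurableSet_Ioi
      have : Ici (0:ℝ) = Icc 0 t ∪ Ioi t := by
        ext u; simp [mem_Icc, mem_Ioi, mem_Ici]
        constructor
        · intro h; rcases le_or_gt u t with h' | h' <;> [exact Or.inl ⟨h, h'⟩; exact Or.inr h']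
        · rintro (⟨h, _⟩ | h) <;> [exact h; linarith]
      rw [this]
      exact hIcc.union hIoi
  rw [← ofReal_integral_eq_lintegral_ofReal hInt
    (Filter.Eventually.of_forall fun u => Real.rpow_nonneg (le_max_right _ _) _)]
  congr 1
  rcases le_or_gt t 0 with ht | ht
  · have h0 : EqOn (fun u : ℝ => max (t - u) 0 ^ q) 0 (Ici 0) := by
      intro u hu
      have : t - u ≤ 0 := by simp at hu ⊢; linarith
      simp [max_eq_right this, Real.zero_rpow hq.ne']
    rw [setIntegral_congr_fun measurableSet_Ici h0]
    have : max t 0 = 0 := max_eq_right ht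
    simp [this, Real.zero_rpow (by positivity : q + 1 ≠ 0)]
  · have hsplit : Ici (0:ℝ) = Icc 0 t ∪ Ioi t := by
      ext u; simp [mem_Icc, mem_Ioi, mem_Ici]
      constructor
      · intro h; rcases le_or_gt u t with h' | h' <;> [exact Or.inl ⟨h, h'⟩; exact Or.inr h']
      · rintro (⟨h, _⟩ | h) <;> [exact h; linarith]
    have hIcc : IntegrableOn (fun u : ℝ => max (t - u) 0 ^ q) (Icc 0 t) :=
      (hcont.comp (continuous_const.sub continuous_id)).continuousOn.integrableOn_compact
        isCompact_Icc
    have hIoi : IntegrableOn (fun u : ℝ => max (t - u) 0 ^ q) (Ioi t) := by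
      have : EqOn (fun u : ℝ => max (t - u) 0 ^ q) 0 (Ioi t) := by
        intro u hu
        have : t - u ≤ 0 := by simp at hu ⊢; linarith
        simp [max_eq_right this, Real.zero_rpow hq.ne']
      exact (integrableOn_zero).congr_fun this.symm measurableSet_Ioi
    rw [hsplit, setIntegral_union ((Iic_disjoint_Ioi le_rfl).mono Icc_subset_Iic_self le_rfl) measurableSet_Ioi hIcc hIoi]
    have hz : ∫ u in Ioi t, max (t - u) 0 ^ q = 0 := by
      rw [setIntegral_congr_fun measurableSet_Ioi (g := fun _ : ℝ => (0:ℝ))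
        (fun u hu => by
          have : t - u ≤ 0 := by simp [mem_Ioi] at hu; linarith
          simp [max_eq_right this, Real.zero_rpow hq.ne'])]
      simp
    have hIcc' : ∫ u in Icc (0:ℝ) t, max (t - u) 0 ^ q = ∫ u in Icc (0:ℝ) t, (t - u) ^ q := by
      apply setIntegral_congr_fun measurableSet_Icc
      intro u hu
      have : 0 ≤ t - u := by simp [mem_Icc] at hu; linarith [hu.2]
      simp [max_eq_left this]
    rw [hz, hIcc', add_zero]
    rw [MeasureTheory.integral_Icc_eq_integral_Ioc,
      ← intervalIntegral.integral_of_le ht.le]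
    rw [intervalIntegral.integral_comp_sub_left (fun v => v ^ q) t]
    simp only [sub_zero, sub_self]
    rw [integral_rpow (Or.inl (by linarith : (-1:ℝ) < q))]
    rw [max_eq_left ht.le]
    rw [Real.zero_rpow (by positivity : q + 1 ≠ 0)]
    ring

lemma meas_cond (m : ℕ) : MeasurableSet {z : Fin m → ℝ | ∀ i, 0 ≤ z i} := by
  have : {z : Fin m → ℝ | ∀ i, 0 ≤ z i} = ⋂ i, (fun z : Fin m → ℝ => z i) ⁻¹' Ici 0 := by
    ext z; simp [mem_Ici]
  rw [this]
  exact MeasurableSet.iInter fun i => (measurable_pi_apply i) measurableSet_Ici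

lemma meas_F (m : ℕ) (t p : ℝ) (hp : 0 ≤ p) :
    Measurable fun z : Fin m → ℝ =>
      (if ∀ i, 0 ≤ z i then ENNReal.ofReal (max (t - ∑ i, z i) 0 ^ p) else 0) := by
  apply Measurable.ite (meas_cond m) _ measurable_const
  exact ENNReal.measurable_ofReal.comp
    (((Real.continuous_rpow_const hp).comp
      ((continuous_const.sub (continuous_finset_sum Finset.univ fun i _ => continuous_apply i)).max
        continuous_const)).measurable)

lemma key_lintegral (p : ℝ) (hp : 0 < p) (m : ℕ) (t : ℝ) :
    ∫⁻ z : Fin m → ℝ, (if ∀ i, 0 ≤ z i then ENNReal.ofReal (max (t - ∑ i, z i) 0 ^ p) else 0)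
      = ENNReal.ofReal
          (max t 0 ^ ((m : ℝ) + p) * (Real.Gamma (p + 1) / Real.Gamma ((m : ℝ) + p + 1))) := by
  induction m generalizing t with
  | zero =>
      simp only [Finset.univ_eq_empty, Finset.sum_empty, sub_zero]
      rw [lintegral_congr (g := fun _ => ENNReal.ofReal (max t 0 ^ p))
        (fun z => if_pos fun i => i.elim0), lintegral_const]
      simp only [Nat.cast_zero, zero_add]
      rw [volume_pi, Measure.pi_univ]
      simp [Real.Gamma_pos_of_pos (by linarith : (0:ℝ) < p + 1), div_self
        (Real.Gamma_pos_of_pos (by linarith : (0:ℝ) < p + 1)).ne']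
  | succ m ih =>
      have hF := meas_F (m+1) t p hp.le
      have hmp := (volume_preserving_piFinSuccAbove (fun _ : Fin (m+1) => ℝ) 0).symm
      rw [← hmp.lintegral_comp hF, Measure.volume_eq_prod,
        lintegral_prod _ (Measurable.aemeasurable (by
          exact hF.comp (MeasurableEquiv.piFinSuccAbove
            (fun _ : Fin (m+1) => ℝ) 0).symm.measurable))]
      have harg : ∀ (u : ℝ) (v : Fin m → ℝ),
          ((MeasurableEquiv.piFinSuccAbove (fun _ : Fin (m+1) => ℝ) 0).symm (u, v))
            = Fin.cons u v := by
        intro u v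
        simp [MeasurableEquiv.piFinSuccAbove, Fin.insertNthEquiv, Fin.insertNth_zero']
      have hstep : ∀ u : ℝ,
          (∫⁻ v : Fin m → ℝ,
            (fun z : Fin (m+1) → ℝ =>
              if ∀ i, 0 ≤ z i then ENNReal.ofReal (max (t - ∑ i, z i) 0 ^ p) else 0)
              ((MeasurableEquiv.piFinSuccAbove (fun _ : Fin (m+1) => ℝ) 0).symm (u, v)))
          = if 0 ≤ u then
              ENNReal.ofReal (max (t - u) 0 ^ ((m:ℝ)+p)) *
                ENNReal.ofReal (Real.Gamma (p+1) / Real.Gamma ((m:ℝ)+p+1))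
            else 0 := by
        intro u
        by_cases hu : 0 ≤ u
        · rw [if_pos hu]
          have : ∀ v : Fin m → ℝ,
              (fun z : Fin (m+1) → ℝ =>
                if ∀ i, 0 ≤ z i then ENNReal.ofReal (max (t - ∑ i, z i) 0 ^ p) else 0)
                ((MeasurableEquiv.piFinSuccAbove (fun _ : Fin (m+1) => ℝ) 0).symm (u, v))
              = (if ∀ i, 0 ≤ v i then ENNReal.ofReal (max ((t-u) - ∑ i, v i) 0 ^ p) else 0) := by
            intro v
            rw [harg u v]
            simp only [Fin.forall_fin_succ, Fin.cons_zero, Fin.cons_succ, Fin.sum_univ_succ]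
            have harith : t - (u + ∑ i, v i) = (t - u) - ∑ i, v i := by ring
            rw [harith]
            by_cases hv : ∀ i, 0 ≤ v i <;> simp [hu, hv]
          rw [lintegral_congr this, ih (t - u), ENNReal.ofReal_mul
            (Real.rpow_nonneg (le_max_right _ _) _)]
        · rw [if_neg hu]
          have : ∀ v : Fin m → ℝ,
              (fun z : Fin (m+1) → ℝ =>
                if ∀ i, 0 ≤ z i then ENNReal.ofReal (max (t - ∑ i, z i) 0 ^ p) else 0)
                ((MeasurableEquiv.piFinSuccAbove (fun _ : Fin (m+1) => ℝ) 0).symm (u, v))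
              = 0 := by
            intro v
            rw [harg u v]
            refine if_neg ?_
            intro h
            exact hu (by simpa using h 0)
          rw [lintegral_congr this, lintegral_zero]
      rw [lintegral_congr hstep]
      have : ∀ u : ℝ, (if 0 ≤ u then
              ENNReal.ofReal (max (t - u) 0 ^ ((m:ℝ)+p)) *
                ENNReal.ofReal (Real.Gamma (p+1) / Real.Gamma ((m:ℝ)+p+1))
            else 0)
          = ENNReal.ofReal (Real.Gamma (p+1) / Real.Gamma ((m:ℝ)+p+1)) *
            (if 0 ≤ u then ENNReal.ofReal (max (t - u) 0 ^ ((m:ℝ)+p)) else 0) := by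
        intro u; by_cases hu : 0 ≤ u <;> simp [hu, mul_comm]
      rw [lintegral_congr this, lintegral_const_mul _ (by
        apply Measurable.ite measurableSet_Ici _ measurable_const
        exact ENNReal.measurable_ofReal.comp
          (((Real.continuous_rpow_const (by positivity : (0:ℝ) ≤ (m:ℝ)+p)).comp
            ((continuous_const.sub continuous_id).max continuous_const)).measurable)),
        lintegral_line ((m:ℝ)+p) t (by positivity)]
      rw [← ENNReal.ofReal_mul (by positivity)]
      congr 1
      have hG : Real.Gamma ((m:ℝ)+p+1+1) = ((m:ℝ)+p+1) * Real.Gamma ((m:ℝ)+p+1) :=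
        Real.Gamma_add_one (by positivity)
      have hGpos : 0 < Real.Gamma ((m:ℝ)+p+1) := Real.Gamma_pos_of_pos (by positivity)
      have hcast : ((m+1 : ℕ) : ℝ) = (m:ℝ)+1 := by push_cast; ring
      rw [hcast]
      have h1 : (m:ℝ)+1+p = ((m:ℝ)+p)+1 := by ring
      rw [h1, hG]
      field_simp

theorem autocorrelation_power_simplex (n : ℕ) (hn : 1 ≤ n) (s : ℝ) (hs : 0 < s)
    (f : EuclideanSpace ℝ (Fin n) → ℝ)
    (hf : ∀ x : EuclideanSpace ℝ (Fin n),
      f x = if ∀ i, 0 ≤ x i then max (1 - ∑ i, x i) 0 ^ (1 / s) else 0)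
    (y : EuclideanSpace ℝ (Fin n)) (hy : ∑ i, y i = 0) :
    ∫ x : EuclideanSpace ℝ (Fin n), f x * f (x + y) =
      euBeta (n : ℝ) (1 + 2 / s) / (Nat.factorial (n - 1) : ℝ) *
        max (1 - (∑ i, |y i|) / 2) 0 ^ ((n : ℝ) + 2 / s) := by
  have hps : (0:ℝ) < 2 / s := by positivity
  set c : ℝ := (∑ i, |y i|) / 2 with hc
  -- measurability of f
  have hcoord : ∀ i, Measurable fun x : EuclideanSpace ℝ (Fin n) => x i := fun i =>
    (measurable_pi_apply i).comp (MeasurableEquiv.toLp 2 (Fin n → ℝ)).symm.measurable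
  have hcond : MeasurableSet {x : EuclideanSpace ℝ (Fin n) | ∀ i, 0 ≤ x i} := by
    have h : {x : EuclideanSpace ℝ (Fin n) | ∀ i, 0 ≤ x i}
        = ⋂ i, (fun x : EuclideanSpace ℝ (Fin n) => x i) ⁻¹' Ici 0 := by ext x; simp [mem_Ici]
    rw [h]; exact MeasurableSet.iInter fun i => (hcoord i) measurableSet_Ici
  have hfm : Measurable f := by
    have h : f = fun x => if ∀ i, 0 ≤ x i then max (1 - ∑ i, x i) 0 ^ (1 / s) else 0 :=
      funext hf
    rw [h]
    apply Measurable.ite hcond _ measurable_const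
    exact ((Real.continuous_rpow_const (by positivity)).measurable).comp
      ((measurable_const.sub
        (Finset.measurable_sum Finset.univ fun i _ => hcoord i)).max measurable_const)
  have hf_nonneg : ∀ x, 0 ≤ f x := fun x => by
    rw [hf]; split
    · exact Real.rpow_nonneg (le_max_right _ _) _
    · exact le_rfl
  have hprodm : Measurable fun x : EuclideanSpace ℝ (Fin n) => f x * f (x + y) :=
    hfm.mul (hfm.comp (measurable_add_const y))
  rw [integral_eq_lintegral_of_nonneg_ae
    (Filter.Eventually.of_forall fun x => mul_nonneg (hf_nonneg x) (hf_nonneg _))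
    hprodm.aestronglyMeasurable]
  have hg : Measurable fun x : EuclideanSpace ℝ (Fin n) => ENNReal.ofReal (f x * f (x + y)) :=
    ENNReal.measurable_ofReal.comp hprodm
  have hmp := (EuclideanSpace.volume_preserving_symm_measurableEquiv_toLp (Fin n)).symm
  rw [← hmp.lintegral_comp hg]
  rw [← lintegral_add_right_eq_self
    (fun z : Fin n → ℝ => ENNReal.ofReal
      (f ((MeasurableEquiv.toLp 2 (Fin n → ℝ)).symm.symm z) *
        f ((MeasurableEquiv.toLp 2 (Fin n → ℝ)).symm.symm z + y))) (fun i => (|y i| - y i) / 2)]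
  have hpt : ∀ z : Fin n → ℝ,
      ENNReal.ofReal
        (f ((MeasurableEquiv.toLp 2 (Fin n → ℝ)).symm.symm (z + fun i => (|y i| - y i) / 2)) *
          f ((MeasurableEquiv.toLp 2 (Fin n → ℝ)).symm.symm (z + fun i => (|y i| - y i) / 2) + y))
      = if ∀ i, 0 ≤ z i then
          ENNReal.ofReal (max ((1 - c) - ∑ i, z i) 0 ^ (2 / s)) else 0 := by
    intro z
    set x : EuclideanSpace ℝ (Fin n) :=
      (MeasurableEquiv.toLp 2 (Fin n → ℝ)).symm.symm (z + fun i => (|y i| - y i) / 2) with hxdef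
    have hxi : ∀ i, x i = z i + (|y i| - y i) / 2 := fun i => rfl
    have hxyi : ∀ i, (x + y) i = z i + (|y i| + y i) / 2 := fun i => by
      have : (x + y) i = x i + y i := rfl
      rw [this, hxi i]; ring
    have hsx : ∑ i, x i = ∑ i, z i + c := by
      rw [Finset.sum_congr rfl fun i _ => hxi i, Finset.sum_add_distrib, ← Finset.sum_div,
        Finset.sum_sub_distrib, hy, hc]
      ring
    have hsxy : ∑ i, (x + y) i = ∑ i, z i + c := by
      rw [Finset.sum_congr rfl fun i _ => hxyi i, Finset.sum_add_distrib, ← Finset.sum_div,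
        Finset.sum_add_distrib, hy, hc]
      ring
    by_cases h : ∀ i, 0 ≤ z i
    · have cond1 : ∀ i, 0 ≤ x i := fun i => by
        rw [hxi i]
        have : 0 ≤ (|y i| - y i) / 2 := by
          have := le_abs_self (y i); linarith
        linarith [h i]
      have cond2 : ∀ i, 0 ≤ (x + y) i := fun i => by
        rw [hxyi i]
        have : 0 ≤ (|y i| + y i) / 2 := by
          have := neg_abs_le (y i); linarith
        linarith [h i]
      rw [if_pos h]
      congr 1
      rw [hf, hf, if_pos cond1, if_pos cond2, hsx, hsxy,
        show 1 - (∑ i, z i + c) = (1 - c) - ∑ i, z i from by ring,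
        show (2:ℝ) / s = 1 / s + 1 / s from by ring,
        Real.rpow_add' (le_max_right _ _) (by positivity)]
    · rw [if_neg h]
      push_neg at h
      obtain ⟨i, hi⟩ := h
      rcases le_total 0 (y i) with hyi | hyi
      · have hx0 : f x = 0 := by
          rw [hf]
          refine if_neg fun hC => ?_
          have := hC i
          rw [hxi i, abs_of_nonneg hyi] at this
          simp at this
          linarith
        simp [hx0]
      · have hx0 : f (x + y) = 0 := by
          rw [hf]
          refine if_neg fun hC => ?_
          have := hC i
          rw [hxyi i, abs_of_nonpos hyi] at this
          simp at this
          linarith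
        simp [hx0]
  rw [lintegral_congr hpt, key_lintegral (2 / s) hps n (1 - c)]
  have hGpos1 : (0:ℝ) < Real.Gamma (2 / s + 1) := Real.Gamma_pos_of_pos (by positivity)
  have hGpos2 : (0:ℝ) < Real.Gamma ((n:ℝ) + 2 / s + 1) := Real.Gamma_pos_of_pos (by positivity)
  rw [ENNReal.toReal_ofReal (by positivity)]
  have hGn : Real.Gamma (n:ℝ) = (Nat.factorial (n - 1) : ℝ) := by
    have h1 := Real.Gamma_nat_eq_factorial (n - 1)
    have h2 : ((n - 1 : ℕ) : ℝ) + 1 = (n : ℝ) := by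
      have : (n - 1) + 1 = n := Nat.succ_pred_eq_of_pos hn
      exact_mod_cast congrArg (Nat.cast : ℕ → ℝ) this
    rwa [h2] at h1
  rw [euBeta, ← hGn, show (n:ℝ) + (1 + 2 / s) = (n:ℝ) + 2 / s + 1 from by ring,
    show (1:ℝ) + 2 / s = 2 / s + 1 from by ring]
  have hGnpos : (0:ℝ) < Real.Gamma (n:ℝ) := Real.Gamma_pos_of_pos (by positivity)
  field_simp
end
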